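/- arXiv:2404.10090 — 13 statements merged into one kernel-verified Lean document; each statement's English description precedes it below -/
import Mathlib

section
/- There exists a stationary transfer scheme τ with 0 < τ(i) < s(i) for every state i such that for every state i: log(s(i) − τ(i)) + β·∑_r π(r)·log(1 − s(r) + τ(r)) > log(s(i)) + β·∑_r π(r)·log(1 − s(r)). That is, there is a nonautarkic stationary sustainable intergenerational insurance rule giving every generation a strict lifetime-utility gain over autarky. -/
open Real Filter Topology

/-!
Take transfers proportional to the endowment of the young, `τ = ε • s`. The young of every state
then give up the same fraction `ε` of their endowment, so their utility gain over autarky is the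
same function of `ε` in every state:
`log (1 - ε) + β * ∑ r, π r * (log (1 - s r + ε * s r) - log (1 - s r))`.
It vanishes at `ε = 0` with derivative `-1 + β * ∑ r, π r * (s r / (1 - s r))`, which is positive
by the sustainability assumption, so it is positive for all small `ε > 0`.
-/

theorem HasDerivAt.eventually_lt_of_pos {f : ℝ → ℝ} {f' a : ℝ} (hf : HasDerivAt f f' a)
    (hf' : 0 < f') : ∀ᶠ x in 𝓝[>] a, f a < f x := by
  have hslope : ∀ᶠ x in 𝓝[>] a, 0 < slope f a x :=
    ((hasDerivAt_iff_tendsto_slope.mp hf).mono_left (nhdsGT_le_nhdsNE a)).eventually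
      (eventually_gt_nhds hf')
  filter_upwards [hslope, self_mem_nhdsWithin] with x hx hax
  exact (slope_pos_iff hax).mp hx

section ProportionalTransfer

variable {ι : Type*} [Fintype ι]

/-- Lifetime utility of the young, less `log` of their endowment, under the transfer `ε • s`. -/
noncomputable def proportionalTransferUtility (β : ℝ) (p s : ι → ℝ) (ε : ℝ) : ℝ :=
  log (1 - ε) + β * ∑ r, p r * log (1 - s r + ε * s r)

theorem hasDerivAt_proportionalTransferUtility (β : ℝ) (p : ι → ℝ) {s : ι → ℝ}
    (hs : ∀ r, s r < 1) :
    HasDerivAt (proportionalTransferUtility β p s)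
      (-1 + β * ∑ r, p r * (s r / (1 - s r))) 0 := by
  have hyoung : HasDerivAt (fun ε : ℝ => log (1 - ε)) (-1) 0 := by
    simpa using ((hasDerivAt_id (0 : ℝ)).const_sub 1).log (by simp)
  have hold (r : ι) :
      HasDerivAt (fun ε : ℝ => log (1 - s r + ε * s r)) (s r / (1 - s r)) 0 := by
    simpa using (((hasDerivAt_id (0 : ℝ)).mul_const (s r)).const_add (1 - s r)).log
      (by simpa using (sub_pos.mpr (hs r)).ne')
  have hsum := HasDerivAt.fun_sum (u := Finset.univ) fun r _ => (hold r).const_mul (p r)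
  exact hyoung.add (hsum.const_mul β)

end ProportionalTransfer

theorem stmt_0_general (I : ℕ) (p s : Fin I → ℝ)
    (hs : ∀ i, s i ∈ Set.Ioo (0 : ℝ) 1)
    (β : ℝ)
    (hsus : 1 < β * ∑ i, p i * (s i / (1 - s i))) :
    ∃ τ : Fin I → ℝ, (∀ i, 0 < τ i ∧ τ i < s i) ∧
      ∀ i, log (s i) + β * ∑ r, p r * log (1 - s r) <
        log (s i - τ i) + β * ∑ r, p r * log (1 - s r + τ r) := by
  have hderiv := hasDerivAt_proportionalTransferUtility β p fun r => (hs r).2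
  obtain ⟨ε, hgain, hε0, hε1⟩ :=
    ((hderiv.eventually_lt_of_pos (by linarith)).and (Ioo_mem_nhdsGT one_pos)).exists
  refine ⟨fun i => ε * s i, fun i => ⟨mul_pos hε0 (hs i).1, mul_lt_of_lt_one_left (hs i).1 hε1⟩,
    fun i => ?_⟩
  have hsplit : log (s i - ε * s i) = log (s i) + log (1 - ε) := by
    rw [← log_mul (hs i).1.ne' (by linarith)]
    ring_nf
  simp only [proportionalTransferUtility, zero_mul, add_zero, sub_zero, log_one, zero_add]
    at hgain
  rw [hsplit]
  linarith

/-- Under the sustainability assumption, there exists a nonautarkic stationary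
sustainable intergenerational insurance rule: a stationary transfer scheme `τ` with
`0 < τ i < s i` in every state giving every generation a strict lifetime-utility
gain over autarky. -/
theorem stmt_0 (I : ℕ) (hI : 2 ≤ I) (p s : Fin I → ℝ)
    (hp : ∀ i, 0 < p i) (hpsum : ∑ i, p i = 1)
    (hs : ∀ i, s i ∈ Set.Ioo (0 : ℝ) 1)
    (β : ℝ) (hβ : β ∈ Set.Ioc (0 : ℝ) 1)
    (hsus : 1 < β * ∑ i, p i * (s i / (1 - s i))) :
    ∃ τ : Fin I → ℝ, (∀ i, 0 < τ i ∧ τ i < s i) ∧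
      ∀ i, log (s i) + β * ∑ r, p r * log (1 - s r) <
        log (s i - τ i) + β * ∑ r, p r * log (1 - s r + τ r) :=
  stmt_0_general I p s hs β hsus
end

section
/- Define G(d) := log(1−d) + β·∑_r π(r)·(log(1 − s(r)·(1−d)) − log(1 − s(r))) for d ∈ [0,1). There is a unique d_max ∈ (0,1) with G(d_max) = 0; moreover G(d) > 0 for all d ∈ (0, d_max) and G(d) < 0 for all d ∈ (d_max, 1). -/
open Real Set Filter Topology

/-! `G` vanishes at `0`, is strictly concave on `[0, 1)`, has slope `β ∑ π s / (1 - s) - 1 > 0`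
at `0` and tends to `-∞` as `d → 1⁻`. So it is positive just right of `0` and negative near `1`,
and the intermediate value theorem gives a zero `d_max ∈ (0, 1)`. A strictly concave function
with the two zeros `0 < d_max` is positive between them and negative beyond `d_max`; this is
the sign pattern, and it also rules out a second zero. -/

theorem concaveOn_finset_sum {𝕜 E β ι : Type*} [Semiring 𝕜] [PartialOrder 𝕜]
    [AddCommMonoid E] [AddCommMonoid β] [PartialOrder β] [IsOrderedAddMonoid β]
    [SMul 𝕜 E] [Module 𝕜 β] {s : Set E} (hs : Convex 𝕜 s) (t : Finset ι) {f : ι → E → β}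
    (hf : ∀ i ∈ t, ConcaveOn 𝕜 s (f i)) : ConcaveOn 𝕜 s fun x => ∑ i ∈ t, f i x := by
  classical
  induction t using Finset.induction_on with
  | empty => simpa using concaveOn_const 0 hs
  | insert i t hi ih =>
    simp only [Finset.sum_insert hi]
    exact (hf i (t.mem_insert_self i)).add (ih fun j hj => hf j (Finset.mem_insert_of_mem hj))

theorem strictConcaveOn_log_affine {a b : ℝ} (hb : b ≠ 0) {t : Set ℝ} (ht : Convex ℝ t)
    (hpos : ∀ x ∈ t, 0 < a + b * x) : StrictConcaveOn ℝ t fun x => log (a + b * x) := by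
  refine ⟨ht, fun x hx y hy hxy θ ψ hθ hψ hθψ => ?_⟩
  have hne : a + b * x ≠ a + b * y := fun h => hxy (mul_left_cancel₀ hb (add_left_cancel h))
  have hlog := strictConcaveOn_log_Ioi.2 (hpos x hx) (hpos y hy) hne hθ hψ hθψ
  have hmix : θ • (a + b * x) + ψ • (a + b * y) = a + b * (θ • x + ψ • y) := by
    simp only [smul_eq_mul]; linear_combination a * hθψ
  rwa [hmix] at hlog

theorem StrictConcaveOn.pos_of_mem_Ioo_of_eq_zero {s : Set ℝ} {f : ℝ → ℝ}
    (hf : StrictConcaveOn ℝ s f) {a b x : ℝ} (ha : a ∈ s) (hb : b ∈ s) (hfa : f a = 0)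
    (hfb : f b = 0) (hx : x ∈ Ioo a b) : 0 < f x := by
  have hab := hx.1.trans hx.2
  have := hf.lt_on_openSegment ha hb hab.ne (by rwa [openSegment_eq_Ioo hab])
  simpa [hfa, hfb] using this

theorem StrictConcaveOn.neg_of_lt_of_eq_zero {s : Set ℝ} {f : ℝ → ℝ}
    (hf : StrictConcaveOn ℝ s f) {a b x : ℝ} (ha : a ∈ s) (hx : x ∈ s) (hfa : f a = 0)
    (hfb : f b = 0) (hab : a < b) (hbx : b < x) : f x < 0 := by
  have := hf.lt_on_openSegment ha hx (hab.trans hbx).ne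
    (by rw [openSegment_eq_Ioo (hab.trans hbx)]; exact ⟨hab, hbx⟩)
  simpa [hfa, hfb] using this

theorem HasDerivWithinAt.eventually_nhdsGT_lt {f : ℝ → ℝ} {f' a : ℝ}
    (hf : HasDerivWithinAt f f' (Ioi a) a) (hf' : 0 < f') : ∀ᶠ x in 𝓝[>] a, f a < f x := by
  have hslope := (hasDerivWithinAt_iff_tendsto_slope' (lt_irrefl a)).1 hf
  filter_upwards [hslope.eventually (lt_mem_nhds hf'), self_mem_nhdsWithin] with x hpos hx
  rw [slope_def_field] at hpos
  exact sub_pos.1 ((div_pos_iff_of_pos_right (sub_pos.2 hx)).1 hpos)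

theorem exists_mem_Ioo_eq_zero {f : ℝ → ℝ} {a b : ℝ} (hab : a < b) (hf : ContinuousOn f (Ioo a b))
    (hpos : ∀ᶠ x in 𝓝[>] a, 0 < f x) (hneg : ∀ᶠ x in 𝓝[<] b, f x < 0) :
    ∃ x ∈ Ioo a b, f x = 0 := by
  obtain ⟨u, hfu, hu⟩ := (hpos.and (Ioo_mem_nhdsGT hab)).exists
  obtain ⟨v, hfv, hv⟩ := (hneg.and (Ioo_mem_nhdsLT hu.2)).exists
  obtain ⟨x, hx, hfx⟩ := intermediate_value_Ioo' hv.1.le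
    (hf.mono (Icc_subset_Ioo hu.1 hv.2)) ⟨hfv, hfu⟩
  exact ⟨x, ⟨hu.1.trans hx.1, hx.2.trans hv.2⟩, hfx⟩

noncomputable def debtGap {ι : Type*} [Fintype ι] (p s : ι → ℝ) (β d : ℝ) : ℝ :=
  log (1 - d) + β * ∑ r, p r * (log (1 - s r * (1 - d)) - log (1 - s r))

section DebtGap

variable {ι : Type*} [Fintype ι] {p s : ι → ℝ} {β : ℝ}

theorem debtGap_zero : debtGap p s β 0 = 0 := by simp [debtGap]

theorem one_sub_mul_one_sub_pos {c d : ℝ} (hc : c ∈ Ioo 0 1) (hd : 0 ≤ d) : 0 < 1 - c * (1 - d) := by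
  nlinarith [hc.1, hc.2, mul_nonneg hc.1.le hd]

theorem continuousOn_debtGap (hs : ∀ i, s i ∈ Ioo 0 1) :
    ContinuousOn (debtGap p s β) (Ioo 0 1) := by
  intro d hd
  have h1 : 1 - d ≠ 0 := by linarith [hd.2]
  have h2 : ∀ r, 1 - s r * (1 - d) ≠ 0 := fun r => (one_sub_mul_one_sub_pos (hs r) hd.1.le).ne'
  unfold debtGap
  exact ContinuousAt.continuousWithinAt (by fun_prop (disch := first | exact h1 | exact h2 _))

theorem tendsto_debtGap_nhdsLT_one : Tendsto (debtGap p s β) (𝓝[<] 1) atBot := by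
  have hlog : Tendsto (fun d : ℝ => log (1 - d)) (𝓝[<] 1) atBot := by
    refine tendsto_log_nhdsGT_zero.comp (tendsto_nhdsWithin_iff.2 ⟨?_, ?_⟩)
    · have : Tendsto (fun d : ℝ => 1 - d) (𝓝 1) (𝓝 (1 - 1)) := tendsto_const_nhds.sub tendsto_id
      simpa using this.mono_left nhdsWithin_le_nhds
    · filter_upwards [self_mem_nhdsWithin] with d hd using sub_pos.2 (mem_Iio.1 hd)
  have hrest : ContinuousAt
      (fun d => β * ∑ r, p r * (log (1 - s r * (1 - d)) - log (1 - s r))) 1 := by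
    fun_prop (disch := simp)
  exact hlog.atBot_add (hrest.tendsto.mono_left nhdsWithin_le_nhds)

theorem hasDerivAt_debtGap_zero (hs : ∀ i, s i ≠ 1) :
    HasDerivAt (debtGap p s β) (β * ∑ i, p i * (s i / (1 - s i)) - 1) 0 := by
  have hlog : HasDerivAt (fun d : ℝ => log (1 - d)) (-1) 0 := by
    simpa using ((hasDerivAt_id (0 : ℝ)).const_sub 1).log (by norm_num)
  have hterm (r : ι) : HasDerivAt (fun d => p r * (log (1 - s r * (1 - d)) - log (1 - s r)))
      (p r * (s r / (1 - s r))) 0 := by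
    have := ((((hasDerivAt_id (0 : ℝ)).const_sub 1).const_mul (s r)).const_sub 1).log
      (by simpa [sub_eq_zero] using (hs r).symm)
    simpa [div_eq_inv_mul] using (this.sub_const (log (1 - s r))).const_mul (p r)
  exact (hlog.add ((HasDerivAt.fun_sum fun r _ => hterm r).const_mul β)).congr_deriv (by ring)

theorem strictConcaveOn_debtGap (hp : ∀ i, 0 ≤ p i) (hs : ∀ i, s i ∈ Ioo 0 1) (hβ : 0 ≤ β) :
    StrictConcaveOn ℝ (Ico 0 1) (debtGap p s β) := by
  have hlog : StrictConcaveOn ℝ (Ico 0 1) fun d : ℝ => log (1 - d) := by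
    simpa [← sub_eq_add_neg] using strictConcaveOn_log_affine (a := 1) (b := -1) (by norm_num)
      (convex_Ico 0 1) fun d hd => by linarith [hd.2]
  have hterm (r : ι) :
      ConcaveOn ℝ (Ico 0 1) fun d => p r * (log (1 - s r * (1 - d)) - log (1 - s r)) := by
    have := (strictConcaveOn_log_affine (a := 1 - s r) (b := s r) (hs r).1.ne' (convex_Ico 0 1)
      fun d hd => by linarith [one_sub_mul_one_sub_pos (hs r) hd.1]).concaveOn
    refine ((this.add_const (-log (1 - s r))).smul (hp r)).congr fun d _ => ?_
    simp only [smul_eq_mul, Pi.add_apply]; ring_nf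
  exact hlog.add_concaveOn ((concaveOn_finset_sum (convex_Ico 0 1) _ fun r _ => hterm r).smul hβ)

end DebtGap

theorem stmt_2_general (I : ℕ) (p s : Fin I → ℝ)
    (hp : ∀ i, 0 < p i)
    (hs : ∀ i, s i ∈ Set.Ioo (0 : ℝ) 1)
    (β : ℝ) (hβ : β ∈ Set.Ioc (0 : ℝ) 1)
    (hsus : 1 < β * ∑ i, p i * (s i / (1 - s i)))
    (G : ℝ → ℝ)
    (hG : ∀ d, G d = log (1 - d) +
        β * ∑ r, p r * (log (1 - s r * (1 - d)) - log (1 - s r))) :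
    (∃! dmax : ℝ, dmax ∈ Set.Ioo (0 : ℝ) 1 ∧ G dmax = 0) ∧
    ∀ dmax ∈ Set.Ioo (0 : ℝ) 1, G dmax = 0 →
      (∀ d ∈ Set.Ioo (0 : ℝ) dmax, 0 < G d) ∧
      (∀ d ∈ Set.Ioo dmax (1 : ℝ), G d < 0) := by
  obtain rfl : G = debtGap p s β := funext hG
  have hconc := strictConcaveOn_debtGap (fun i => (hp i).le) hs hβ.1.le
  have h0 : (0 : ℝ) ∈ Ico 0 1 := ⟨le_rfl, one_pos⟩
  have hsign : ∀ m ∈ Ioo (0 : ℝ) 1, debtGap p s β m = 0 →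
      (∀ d ∈ Ioo 0 m, 0 < debtGap p s β d) ∧ ∀ d ∈ Ioo m 1, debtGap p s β d < 0 :=
    fun m hm hzero =>
      ⟨fun d hd => hconc.pos_of_mem_Ioo_of_eq_zero h0 (Ioo_subset_Ico_self hm) debtGap_zero
          hzero hd,
        fun d hd => hconc.neg_of_lt_of_eq_zero h0 ⟨hm.1.le.trans hd.1.le, hd.2⟩ debtGap_zero
          hzero hm.1 hd.1⟩
  have hpos : ∀ᶠ d in 𝓝[>] 0, 0 < debtGap p s β d := by
    simpa only [debtGap_zero] using (hasDerivAt_debtGap_zero fun i => (hs i).2.ne)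
      |>.hasDerivWithinAt.eventually_nhdsGT_lt (sub_pos.2 hsus)
  obtain ⟨dmax, hmem, hzero⟩ := exists_mem_Ioo_eq_zero one_pos (continuousOn_debtGap hs) hpos
    (tendsto_debtGap_nhdsLT_one.eventually (eventually_lt_atBot 0))
  refine ⟨⟨dmax, ⟨hmem, hzero⟩, fun y ⟨hy, hGy⟩ => ?_⟩, hsign⟩
  rcases lt_trichotomy y dmax with hlt | heq | hgt
  · exact absurd hGy ((hsign dmax hmem hzero).1 y ⟨hy.1, hlt⟩).ne'
  · exact heq
  · exact absurd hGy ((hsign dmax hmem hzero).2 y ⟨hgt, hy.2⟩).ne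

/-- For `G d = log (1-d) + β ∑ r, p r * (log (1 - s r * (1-d)) - log (1 - s r))`
there is a unique `d_max ∈ (0,1)` with `G d_max = 0`; moreover `G > 0` on
`(0, d_max)` and `G < 0` on `(d_max, 1)`. -/
theorem stmt_2 (I : ℕ) (hI : 2 ≤ I) (p s : Fin I → ℝ)
    (hp : ∀ i, 0 < p i) (hpsum : ∑ i, p i = 1)
    (hs : ∀ i, s i ∈ Set.Ioo (0 : ℝ) 1)
    (β : ℝ) (hβ : β ∈ Set.Ioc (0 : ℝ) 1)
    (hsus : 1 < β * ∑ i, p i * (s i / (1 - s i)))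
    (G : ℝ → ℝ)
    (hG : ∀ d, G d = log (1 - d) +
        β * ∑ r, p r * (log (1 - s r * (1 - d)) - log (1 - s r))) :
    (∃! dmax : ℝ, dmax ∈ Set.Ioo (0 : ℝ) 1 ∧ G dmax = 0) ∧
    ∀ dmax ∈ Set.Ioo (0 : ℝ) 1, G dmax = 0 →
      (∀ d ∈ Set.Ioo (0 : ℝ) dmax, 0 < G d) ∧
      (∀ d ∈ Set.Ioo dmax (1 : ℝ), G d < 0) :=
  stmt_2_general I p s hp hs β hβ hsus G hG
end

section
/- The equation log(c) + β·log(1−c) = log(s) + β·log(1−s) has exactly one solution c_min in the interval (0, s), and this solution satisfies 0 < c_min < 1/(1+β) < s. -/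
/-!
The map `F c = log c + β log (1 - c)` has derivative `1/c - β/(1 - c)`, which vanishes only at
`c = 1/(1+β)`: `F` increases strictly on `(0, 1/(1+β)]` and decreases strictly on
`[1/(1+β), 1)`, and `F c ≤ log c → -∞` as `c → 0⁺`. Since `1/(1+β) < s`, the value `F s` lies
strictly below the maximum of `F`, so it is attained exactly once on the increasing branch, while
on `[1/(1+β), s)` the decreasing branch stays above `F s`.
-/

open Real Set

theorem one_div_one_add_mem_Ioo {β : ℝ} (hβ : 0 < β) : 1 / (1 + β) ∈ Ioo (0 : ℝ) 1 :=
  ⟨by positivity, (div_lt_one (by linarith)).2 (by linarith)⟩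

noncomputable def lifetimeLogUtility (β c : ℝ) : ℝ := log c + β * log (1 - c)

namespace lifetimeLogUtility

variable {β c : ℝ}

theorem hasDerivAt (hc₀ : c ≠ 0) (hc₁ : c ≠ 1) :
    HasDerivAt (lifetimeLogUtility β) (1 / c - β / (1 - c)) c := by
  have hsub : HasDerivAt (fun x : ℝ => log (1 - x)) ((1 - c)⁻¹ * (-1)) c :=
    (hasDerivAt_log (sub_ne_zero.2 hc₁.symm)).comp c ((hasDerivAt_id c).const_sub 1)
  exact ((hasDerivAt_log hc₀).add (hsub.const_mul β)).congr_deriv (by ring)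

theorem continuousOn_Ioo : ContinuousOn (lifetimeLogUtility β) (Ioo 0 1) := fun _ hc =>
  (hasDerivAt hc.1.ne' hc.2.ne).continuousAt.continuousWithinAt

theorem le_log (hβ : 0 ≤ β) (hc₀ : 0 ≤ c) (hc₁ : c ≤ 1) : lifetimeLogUtility β c ≤ log c := by
  have : log (1 - c) ≤ 0 := log_nonpos (by linarith) (by linarith)
  unfold lifetimeLogUtility
  nlinarith

theorem strictMonoOn (hβ : 0 < β) : StrictMonoOn (lifetimeLogUtility β) (Ioc 0 (1 / (1 + β))) := by
  have hIoc : Ioc 0 (1 / (1 + β)) ⊆ Ioo 0 1 :=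
    Ioc_subset_Ioo_right (one_div_one_add_mem_Ioo hβ).2
  refine strictMonoOn_of_deriv_pos (convex_Ioc _ _) (continuousOn_Ioo.mono hIoc) fun x hx => ?_
  rw [interior_Ioc] at hx
  obtain ⟨hx₀, hx₁⟩ := hIoc (Ioo_subset_Ioc_self hx)
  have hxβ : x * (1 + β) < 1 := (lt_div_iff₀ (by linarith)).1 hx.2
  rw [(hasDerivAt hx₀.ne' hx₁.ne).deriv, sub_pos, div_lt_div_iff₀ (by linarith) hx₀]
  linarith

theorem strictAntiOn (hβ : 0 < β) : StrictAntiOn (lifetimeLogUtility β) (Ico (1 / (1 + β)) 1) := by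
  have hIco : Ico (1 / (1 + β)) 1 ⊆ Ioo 0 1 :=
    Ico_subset_Ioo_left (one_div_one_add_mem_Ioo hβ).1
  refine strictAntiOn_of_deriv_neg (convex_Ico _ _) (continuousOn_Ioo.mono hIco) fun x hx => ?_
  rw [interior_Ico] at hx
  obtain ⟨hx₀, hx₁⟩ := hIco (Ioo_subset_Ico_self hx)
  have hxβ : 1 < x * (1 + β) := (div_lt_iff₀ (by linarith)).1 hx.1
  rw [(hasDerivAt hx₀.ne' hx₁.ne).deriv, sub_neg, div_lt_div_iff₀ hx₀ (by linarith)]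
  linarith

theorem exists_mem_Ioc_eq (hβ : 0 < β) {y : ℝ} (hy : y ≤ lifetimeLogUtility β (1 / (1 + β))) :
    ∃ c ∈ Ioc 0 (1 / (1 + β)), lifetimeLogUtility β c = y := by
  set m := 1 / (1 + β)
  obtain ⟨hm₀, hm₁⟩ := one_div_one_add_mem_Ioo hβ
  -- `t = m e^y` satisfies `F t ≤ log t = log m + y ≤ y`
  set t := m * exp y
  have ht₀ : 0 < t := by positivity
  have htm : t ≤ m := by
    have : exp y ≤ 1 := by
      rw [exp_le_one_iff]
      linarith [le_log hβ.le hm₀.le hm₁.le, log_neg hm₀ hm₁]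
    nlinarith
  have hFt : lifetimeLogUtility β t ≤ y := by
    have hlog : log t = log m + y := by rw [log_mul hm₀.ne' (exp_pos y).ne', log_exp]
    linarith [le_log hβ.le ht₀.le (by linarith), log_neg hm₀ hm₁]
  have hcont : ContinuousOn (lifetimeLogUtility β) (Icc t m) :=
    continuousOn_Ioo.mono (Icc_subset_Ioo ht₀ hm₁)
  obtain ⟨c, ⟨htc, hcm⟩, hc⟩ := intermediate_value_Icc htm hcont ⟨hFt, hy⟩
  exact ⟨c, ⟨ht₀.trans_le htc, hcm⟩, hc⟩

theorem lt_one_div_of_eq {s : ℝ} (hβ : 0 < β) (hs : s < 1) (hcs : c < s)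
    (h : lifetimeLogUtility β c = lifetimeLogUtility β s) : c < 1 / (1 + β) := by
  by_contra! hc
  exact (strictAntiOn hβ ⟨hc, hcs.trans hs⟩ ⟨hc.trans hcs.le, hs⟩ hcs).ne' h

end lifetimeLogUtility

/-- Under the Samuelson condition `1/(1+β) < s < 1`, the equation
`log c + β log (1-c) = log s + β log (1-s)` has exactly one solution `c_min`
in `(0, s)`, and any such solution satisfies `c_min < 1/(1+β)`. -/
theorem stmt_4 (β s : ℝ) (hβ : β ∈ Set.Ioc (0 : ℝ) 1)
    (hs1 : 1 / (1 + β) < s) (hs2 : s < 1) :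
    (∃! c : ℝ, c ∈ Set.Ioo (0 : ℝ) s ∧
        log c + β * log (1 - c) = log s + β * log (1 - s)) ∧
    ∀ c ∈ Set.Ioo (0 : ℝ) s,
      log c + β * log (1 - c) = log s + β * log (1 - s) →
        c < 1 / (1 + β) := by
  have hβ₀ : 0 < β := hβ.1
  have hbelow : ∀ c ∈ Ioo (0 : ℝ) s, lifetimeLogUtility β c = lifetimeLogUtility β s →
      c < 1 / (1 + β) := fun c hc => lifetimeLogUtility.lt_one_div_of_eq hβ₀ hs2 hc.2
  have hmax : lifetimeLogUtility β s < lifetimeLogUtility β (1 / (1 + β)) :=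
    lifetimeLogUtility.strictAntiOn hβ₀ ⟨le_rfl, hs1.trans hs2⟩ ⟨hs1.le, hs2⟩ hs1
  obtain ⟨c, ⟨hc₀, hcm⟩, hc⟩ := lifetimeLogUtility.exists_mem_Ioc_eq hβ₀ hmax.le
  refine ⟨⟨c, ⟨⟨hc₀, hcm.trans_lt hs1⟩, hc⟩, ?_⟩, hbelow⟩
  rintro d ⟨hd, hdc⟩
  exact (lifetimeLogUtility.strictMonoOn hβ₀).injOn ⟨hd.1, (hbelow d hd hdc).le⟩ ⟨hc₀, hcm⟩
    (hdc.trans hc.symm)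
end

section
/- Assume c* > c_min. Then exp(υ̂ − β·ω*) < δ/(β+δ); consequently ω^c := log(1 − exp(υ̂ − β·ω*)) is well-defined and satisfies ω^c > ω*. -/
open Real

/- The lifetime utility `c ↦ log c + β log (1 - c)` of a young agent consuming `c` is concave
with its peak at `1/(1+β)`, and `c* = δ/(β+δ)` lies below that peak. Hence `c_min < c*` gives
`υ̂ = log c_min + β log (1 - c_min) < log c* + β log (1 - c*)`, i.e. `υ̂ - β ω* < log c*`
because `1 - c* = β/(β+δ) = exp ω*`. Exponentiating gives the first claim, and then
`1 - exp (υ̂ - β ω*) > 1 - c* = exp ω*` gives the second. -/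

lemma strictMonoOn_log_add_mul_log_one_sub {β : ℝ} (hβ : 0 < β) :
    StrictMonoOn (fun c => log c + β * log (1 - c)) (Set.Ioc 0 (1 / (1 + β))) := by
  have hpeak : 1 / (1 + β) < 1 := by rw [div_lt_one (by linarith)]; linarith
  apply strictMonoOn_of_deriv_pos (convex_Ioc _ _)
  · intro c ⟨hc0, hc⟩
    have : 1 - c ≠ 0 := by linarith
    exact ((continuousAt_log hc0.ne').add
      (continuousAt_const.mul ((continuousAt_log this).comp (by fun_prop)))).continuousWithinAt
  · rw [interior_Ioc]
    rintro c ⟨hc0, hc⟩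
    have h1c : 0 < 1 - c := by linarith
    have hderiv : HasDerivAt (fun c => log c + β * log (1 - c)) (1 / c - β / (1 - c)) c := by
      have hlog := (hasDerivAt_id' c).log hc0.ne'
      have hlog_one_sub := ((hasDerivAt_id' c).const_sub 1).log h1c.ne'
      exact (hlog.add (hlog_one_sub.const_mul β)).congr_deriv (by ring)
    rw [hderiv.deriv, sub_pos, div_lt_div_iff₀ h1c hc0]
    rw [lt_div_iff₀ (by linarith)] at hc
    linarith

lemma div_add_le_one_div_one_add {β δ : ℝ} (hβ : 0 < β) (hδ0 : 0 < δ) (hδ1 : δ ≤ 1) :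
    δ / (β + δ) ≤ 1 / (1 + β) := by
  rw [div_le_div_iff₀ (by linarith) (by linarith)]
  nlinarith

theorem stmt_5_general (β δ s cmin : ℝ)
    (hβ : β ∈ Set.Ioc (0 : ℝ) 1) (hδ : δ ∈ Set.Ioo (0 : ℝ) 1)
    (hcmin : cmin ∈ Set.Ioo (0 : ℝ) s)
    (hcmineq : log cmin + β * log (1 - cmin) = log s + β * log (1 - s))
    (hfb : cmin < δ / (β + δ)) :
    exp ((log s + β * log (1 - s)) - β * log (β / (β + δ))) < δ / (β + δ) ∧
    log (β / (β + δ)) <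
      log (1 - exp ((log s + β * log (1 - s)) - β * log (β / (β + δ)))) := by
  obtain ⟨hβ0, -⟩ := hβ
  obtain ⟨hδ0, hδ1⟩ := hδ
  have hβδ : 0 < β + δ := by linarith
  have hcstar_mem : δ / (β + δ) ∈ Set.Ioc 0 (1 / (1 + β)) :=
    ⟨div_pos hδ0 hβδ, div_add_le_one_div_one_add hβ0 hδ0 hδ1.le⟩
  have hcmin_mem : cmin ∈ Set.Ioc 0 (1 / (1 + β)) := ⟨hcmin.1, hfb.le.trans hcstar_mem.2⟩
  have hone_sub : 1 - δ / (β + δ) = β / (β + δ) := by field_simp; ring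
  have hutil := strictMonoOn_log_add_mul_log_one_sub hβ0 hcmin_mem hcstar_mem hfb
  simp only [hone_sub, hcmineq] at hutil
  have hexp : exp ((log s + β * log (1 - s)) - β * log (β / (β + δ))) < δ / (β + δ) :=
    (lt_log_iff_exp_lt hcstar_mem.1).mp (by linarith)
  exact ⟨hexp, log_lt_log (div_pos hβ0 hβδ) (by linarith)⟩

/-- Deterministic economy with `υ̂ = log s + β log (1-s)` and `ω* = log (β/(β+δ))`.
If the first best is sustainable, `c* = δ/(β+δ) > c_min`, then
`exp (υ̂ - β ω*) < δ/(β+δ)`, so `ω^c = log (1 - exp (υ̂ - β ω*))` is well-defined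
and satisfies `ω^c > ω*`. -/
theorem stmt_5 (β δ s cmin : ℝ)
    (hβ : β ∈ Set.Ioc (0 : ℝ) 1) (hδ : δ ∈ Set.Ioo (0 : ℝ) 1)
    (hs1 : 1 / (1 + β) < s) (hs2 : s < 1)
    (hcmin : cmin ∈ Set.Ioo (0 : ℝ) s)
    (hcmineq : log cmin + β * log (1 - cmin) = log s + β * log (1 - s))
    (hfb : cmin < δ / (β + δ)) :
    exp ((log s + β * log (1 - s)) - β * log (β / (β + δ))) < δ / (β + δ) ∧
    log (β / (β + δ)) <
      log (1 - exp ((log s + β * log (1 - s)) - β * log (β / (β + δ)))) :=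
  stmt_5_general β δ s cmin hβ hδ hcmin hcmineq hfb
end

section
/- Define g̃(ω) := (υ̂ − log(1 − exp(ω)))/β on [ω_min, ω_max]. Then g̃ is strictly increasing and strictly convex, g̃(ω_min) = ω_min, g̃(ω_max) = ω_max, and g̃(ω) < ω for every ω ∈ (ω_min, ω_max). -/
/-!
`g̃` is an increasing affine image of `ω ↦ -log (1 - exp ω)`, whose derivative
`exp ω / (1 - exp ω)` is positive and strictly increasing on `(-∞, 0)`. The defining equations
of `ω_min` and `c_min` say exactly that both endpoints are fixed points, and a strictly convex
function lies strictly below its chord, which here is the diagonal.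
-/

open Real Set Function

lemma one_sub_exp_log_one_sub {x : ℝ} (hx : x < 1) : 1 - exp (log (1 - x)) = x := by
  rw [exp_log (by linarith)]
  ring

lemma one_sub_exp_pos {x : ℝ} (hx : x < 0) : 0 < 1 - exp x :=
  sub_pos.2 (exp_lt_one_iff.2 hx)

lemma hasDerivAt_neg_log_one_sub_exp {x : ℝ} (hx : x < 0) :
    HasDerivAt (fun x => -log (1 - exp x)) (exp x / (1 - exp x)) x := by
  have h := (((hasDerivAt_exp x).const_sub 1).log (one_sub_exp_pos hx).ne').neg
  simpa only [neg_div, neg_neg, Pi.neg_def] using h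

lemma strictMonoOn_exp_div_one_sub_exp :
    StrictMonoOn (fun x => exp x / (1 - exp x)) (Iio 0) := by
  intro x hx y hy hxy
  have hexp : exp x < exp y := exp_lt_exp.2 hxy
  dsimp only
  rw [div_lt_div_iff₀ (one_sub_exp_pos hx) (one_sub_exp_pos hy)]
  nlinarith [exp_pos x]

lemma continuousOn_neg_log_one_sub_exp :
    ContinuousOn (fun x => -log (1 - exp x)) (Iio 0) := fun _ hx =>
  (hasDerivAt_neg_log_one_sub_exp hx).continuousAt.continuousWithinAt

lemma deriv_neg_log_one_sub_exp_eqOn :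
    EqOn (deriv fun x => -log (1 - exp x)) (fun x => exp x / (1 - exp x)) (Iio 0) :=
  fun _ hx => (hasDerivAt_neg_log_one_sub_exp hx).deriv

lemma strictMonoOn_neg_log_one_sub_exp :
    StrictMonoOn (fun x => -log (1 - exp x)) (Iio 0) := by
  refine strictMonoOn_of_deriv_pos (convex_Iio 0) continuousOn_neg_log_one_sub_exp fun x hx => ?_
  rw [interior_Iio] at hx
  rw [deriv_neg_log_one_sub_exp_eqOn hx]
  exact div_pos (exp_pos x) (one_sub_exp_pos hx)

lemma strictConvexOn_neg_log_one_sub_exp :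
    StrictConvexOn ℝ (Iio 0) (fun x => -log (1 - exp x)) := by
  refine StrictMonoOn.strictConvexOn_of_deriv (convex_Iio 0) continuousOn_neg_log_one_sub_exp ?_
  rw [interior_Iio]
  exact strictMonoOn_exp_div_one_sub_exp.congr deriv_neg_log_one_sub_exp_eqOn.symm

lemma StrictMonoOn.const_add_div {s : Set ℝ} {f : ℝ → ℝ} (hf : StrictMonoOn f s) (c : ℝ)
    {β : ℝ} (hβ : 0 < β) : StrictMonoOn (fun x => (c + f x) / β) s := fun _ hx _ hy hxy =>
  div_lt_div_of_pos_right (add_lt_add_right (hf hx hy hxy) c) hβ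

lemma StrictConvexOn.const_add_div {s : Set ℝ} {f : ℝ → ℝ} (hf : StrictConvexOn ℝ s f) (c : ℝ)
    {β : ℝ} (hβ : 0 < β) : StrictConvexOn ℝ s (fun x => (c + f x) / β) := by
  refine ⟨hf.1, fun x hx y hy hxy a b ha hb hab => ?_⟩
  have h := hf.2 hx hy hxy ha hb hab
  simp only [smul_eq_mul] at h ⊢
  calc (c + f (a * x + b * y)) / β < (c + (a * f x + b * f y)) / β := by gcongr
    _ = a * ((c + f x) / β) + b * ((c + f y) / β) := by
      rw [eq_sub_of_add_eq' hab]
      ring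

lemma StrictConvexOn.lt_self_of_isFixedPt {f : ℝ → ℝ} {a b x : ℝ}
    (hf : StrictConvexOn ℝ (Icc a b) f) (ha : IsFixedPt f a) (hb : IsFixedPt f b)
    (hx : x ∈ Ioo a b) : f x < x := by
  have hab : a ≤ b := (hx.1.trans hx.2).le
  have hslope :=
    hf.slope_strict_mono_adjacent (left_mem_Icc.2 hab) (right_mem_Icc.2 hab) hx.1 hx.2
  rw [ha.eq, hb.eq, div_lt_div_iff₀ (sub_pos.2 hx.1) (sub_pos.2 hx.2)] at hslope
  -- if `x ≤ f x`, the left slope is at least `1` and the right one at most `1`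
  by_contra! hle
  nlinarith [hx.1, hx.2]

theorem stmt_6_general (β s cmin : ℝ)
    (hβ : β ∈ Set.Ioc (0 : ℝ) 1)
    (hs2 : s < 1)
    (hcmin : cmin ∈ Set.Ioo (0 : ℝ) s)
    (hcmineq : log cmin + β * log (1 - cmin) = log s + β * log (1 - s))
    (gt : ℝ → ℝ)
    (hgt : ∀ ω, gt ω = ((log s + β * log (1 - s)) - log (1 - exp ω)) / β) :
    StrictMonoOn gt (Set.Icc (log (1 - s)) (log (1 - cmin))) ∧
    StrictConvexOn ℝ (Set.Icc (log (1 - s)) (log (1 - cmin))) gt ∧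
    gt (log (1 - s)) = log (1 - s) ∧
    gt (log (1 - cmin)) = log (1 - cmin) ∧
    ∀ ω ∈ Set.Ioo (log (1 - s)) (log (1 - cmin)), gt ω < ω := by
  obtain ⟨hβ0, -⟩ := hβ
  obtain ⟨hc0, hcs⟩ := hcmin
  have hgt' : gt = fun ω => ((log s + β * log (1 - s)) + -log (1 - exp ω)) / β :=
    funext fun ω => by rw [hgt, sub_eq_add_neg]
  have hIcc : Icc (log (1 - s)) (log (1 - cmin)) ⊆ Iio 0 := fun ω hω =>
    hω.2.trans_lt (log_neg (by linarith) (by linarith))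
  have hconv : StrictConvexOn ℝ (Icc (log (1 - s)) (log (1 - cmin))) gt := by
    rw [hgt']
    exact (strictConvexOn_neg_log_one_sub_exp.subset hIcc (convex_Icc _ _)).const_add_div _ hβ0
  have hfix_s : gt (log (1 - s)) = log (1 - s) := by
    rw [hgt, one_sub_exp_log_one_sub hs2]
    field_simp
    ring
  have hfix_cmin : gt (log (1 - cmin)) = log (1 - cmin) := by
    rw [hgt, one_sub_exp_log_one_sub (hcs.trans hs2), div_eq_iff hβ0.ne']
    linarith
  refine ⟨?_, hconv, hfix_s, hfix_cmin, fun ω hω => hconv.lt_self_of_isFixedPt hfix_s hfix_cmin hω⟩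
  rw [hgt']
  exact (strictMonoOn_neg_log_one_sub_exp.mono hIcc).const_add_div _ hβ0

/-- The map `g̃ ω = (υ̂ - log (1 - exp ω)) / β` on `[ω_min, ω_max]` is strictly
increasing and strictly convex, fixes the endpoints `ω_min = log (1-s)` and
`ω_max = log (1 - c_min)`, and satisfies `g̃ ω < ω` on the open interval. -/
theorem stmt_6 (β δ s cmin : ℝ)
    (hβ : β ∈ Set.Ioc (0 : ℝ) 1) (hδ : δ ∈ Set.Ioo (0 : ℝ) 1)
    (hs1 : 1 / (1 + β) < s) (hs2 : s < 1)
    (hcmin : cmin ∈ Set.Ioo (0 : ℝ) s)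
    (hcmineq : log cmin + β * log (1 - cmin) = log s + β * log (1 - s))
    (gt : ℝ → ℝ)
    (hgt : ∀ ω, gt ω = ((log s + β * log (1 - s)) - log (1 - exp ω)) / β) :
    StrictMonoOn gt (Set.Icc (log (1 - s)) (log (1 - cmin))) ∧
    StrictConvexOn ℝ (Set.Icc (log (1 - s)) (log (1 - cmin))) gt ∧
    gt (log (1 - s)) = log (1 - s) ∧
    gt (log (1 - cmin)) = log (1 - cmin) ∧
    ∀ ω ∈ Set.Ioo (log (1 - s)) (log (1 - cmin)), gt ω < ω :=
  stmt_6_general β s cmin hβ hs2 hcmin hcmineq gt hgt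
end

section
/- Assume ω* < ω_max, and define the policy function g(ω) := ω* for ω ∈ [ω_min, ω^c] and g(ω) := g̃(ω) = (υ̂ − log(1 − exp(ω)))/β for ω ∈ (ω^c, ω_max], where ω^c := log(1 − exp(υ̂ − β·ω*)). Then for every ω₀ ∈ [ω_min, ω_max), the sequence defined by ω_{t+1} = g(ω_t) reaches ω* in finite time: there exists a finite T ≥ 1 with ω_t = ω* for all t ≥ T. Moreover, if ω₀ > ω* then, taking T minimal, ω₀ > ω₁ > … > ω_T = ω* (the sequence is strictly decreasing until it reaches ω*), and if ω₀ ≤ ω* then ω_t = ω* for all t ≥ 1. -/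
open Real Set

/-!
Let `φ ω = log (1 - exp ω) + β ω`. On `(ω^c, ω_max]` the policy `g̃` solves
`log (1 - exp ω) + β g̃ ω = υ̂`, so `g̃ ω < ω` exactly when `φ ω > υ̂`. Now `φ ω_max = υ̂` by the
choice of `c_min`, and on `[ω*, ω_max]` the slope of `φ` is
`β - exp ω / (1 - exp ω) ≤ β - β / δ < 0`. Hence `φ ω - υ̂ ≥ (β / δ - β) (ω_max - ω)` there, so
`g̃` lowers `ω` by a step that is bounded below on `(ω^c, ω₀]`, while it never goes below `ω*`.
After finitely many steps the sequence enters `[ω_min, ω^c]`, where `g` jumps to `ω* ≤ ω^c`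
and stays there.
-/

structure IsThresholdPolicy (g : ℝ → ℝ) (L C M : ℝ) : Prop where
  le_threshold : L ≤ C
  eq_of_le : ∀ ω ≤ C, g ω = L
  lt_of_threshold_lt : ∀ ω, C < ω → ω < M → L < g ω
  exists_sub_le : ∀ b < M, ∃ ε > 0, ∀ ω, C < ω → ω ≤ b → g ω ≤ ω - ε

namespace IsThresholdPolicy

variable {g : ℝ → ℝ} {L C M : ℝ} {seq : ℕ → ℝ}

theorem lt_self (hg : IsThresholdPolicy g L C M) {ω : ℝ} (hω : ω ∈ Ioo L M) : g ω < ω := by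
  rcases le_or_gt ω C with hωC | hCω
  · rw [hg.eq_of_le ω hωC]
    exact hω.1
  · obtain ⟨ε, hε, hsub⟩ := hg.exists_sub_le ω hω.2
    linarith [hsub ω hCω le_rfl]

theorem mapsTo_Ico (hg : IsThresholdPolicy g L C M) (hLM : L < M) :
    MapsTo g (Ico L M) (Ico L M) := by
  intro ω hω
  rcases le_or_gt ω C with hωC | hCω
  · rw [hg.eq_of_le ω hωC]
    exact ⟨le_rfl, hLM⟩
  · have hlt := hg.lt_self ⟨hg.le_threshold.trans_lt hCω, hω.2⟩
    exact ⟨(hg.lt_of_threshold_lt ω hCω hω.2).le, hlt.trans hω.2⟩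

theorem eq_of_le_threshold (hg : IsThresholdPolicy g L C M)
    (hrec : ∀ t, seq (t + 1) = g (seq t)) {t u : ℕ} (ht : seq t ≤ C) (htu : t < u) :
    seq u = L := by
  induction u, htu using Nat.le_induction with
  | base => rw [hrec, hg.eq_of_le _ ht]
  | succ u _ ih => rw [hrec, ih, hg.eq_of_le _ hg.le_threshold]

theorem exists_le_threshold (hg : IsThresholdPolicy g L C M)
    (hrec : ∀ t, seq (t + 1) = g (seq t)) (h0 : seq 0 < M) : ∃ n, seq n ≤ C := by
  obtain ⟨ε, hε, hsub⟩ := hg.exists_sub_le (seq 0) h0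
  by_contra! habove
  have hdescent : ∀ n : ℕ, seq n ≤ seq 0 - n * ε := by
    intro n
    induction n with
    | zero => simp
    | succ n ih =>
      have hstep := hsub (seq n) (habove n) (ih.trans (by nlinarith [n.cast_nonneg (α := ℝ)]))
      rw [hrec]
      push_cast
      linarith
  obtain ⟨N, hN⟩ := exists_nat_gt ((seq 0 - C) / ε)
  rw [div_lt_iff₀ hε] at hN
  linarith [hdescent N, habove N]

theorem eventually_eq (hg : IsThresholdPolicy g L C M)
    (hrec : ∀ t, seq (t + 1) = g (seq t)) (h0 : seq 0 < M) :
    ∃ T, 1 ≤ T ∧ ∀ t ≥ T, seq t = L := by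
  obtain ⟨n, hn⟩ := hg.exists_le_threshold hrec h0
  exact ⟨n + 1, by omega, fun t ht => hg.eq_of_le_threshold hrec hn ht⟩

theorem mem_Ico (hg : IsThresholdPolicy g L C M) (hrec : ∀ t, seq (t + 1) = g (seq t))
    (hLM : L < M) (h0 : seq 0 ∈ Ico L M) (t : ℕ) : seq t ∈ Ico L M := by
  induction t with
  | zero => exact h0
  | succ t ih => exact hrec t ▸ hg.mapsTo_Ico hLM ih

theorem succ_lt_of_ne (hg : IsThresholdPolicy g L C M) (hrec : ∀ t, seq (t + 1) = g (seq t))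
    (hLM : L < M) (h0 : seq 0 ∈ Ico L M) {t : ℕ} (ht : seq t ≠ L) : seq (t + 1) < seq t := by
  have hmem := hg.mem_Ico hrec hLM h0 t
  rw [hrec]
  exact hg.lt_self ⟨lt_of_le_of_ne hmem.1 (Ne.symm ht), hmem.2⟩

end IsThresholdPolicy

theorem log_one_sub_exp_add_mul_le {k a b : ℝ} (hk : k * (1 - exp a) ≤ exp a) (hab : a ≤ b)
    (hb : exp b < 1) : log (1 - exp b) + k * (b - a) ≤ log (1 - exp a) := by
  have ha : 0 < 1 - exp a := by linarith [exp_le_exp.2 hab]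
  have hb' : 0 < 1 - exp b := by linarith
  have hgrowth : exp a * (b - a) ≤ exp b - exp a := by
    have h := mul_le_mul_of_nonneg_left (add_one_le_exp (b - a)) (exp_pos a).le
    rw [← exp_add, add_sub_cancel] at h
    linarith
  have hslope : k * (b - a) ≤ (exp b - exp a) / (1 - exp a) := by
    rw [le_div_iff₀ ha]
    nlinarith [mul_le_mul_of_nonneg_right hk (sub_nonneg.2 hab)]
  have hlog : log (1 - exp b) - log (1 - exp a) ≤ (1 - exp b) / (1 - exp a) - 1 := by
    rw [← log_div hb'.ne' ha.ne']
    exact log_le_sub_one_of_pos (div_pos hb' ha)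
  have hquot : (1 - exp b) / (1 - exp a) - 1 = -((exp b - exp a) / (1 - exp a)) := by
    field_simp
    ring
  linarith

theorem log_add_mul_log_one_sub_add_mul_le {β δ c ω : ℝ} (hβ : 0 < β) (hδ : 0 < δ)
    (hc0 : 0 < c) (hc1 : c < 1) (hω : log (β / (β + δ)) ≤ ω) (hωc : ω ≤ log (1 - c)) :
    log c + β * log (1 - c) + (β / δ - β) * (log (1 - c) - ω) ≤ log (1 - exp ω) + β * ω := by
  have hexp : β / (β + δ) ≤ exp ω := by
    rwa [← exp_le_exp, exp_log (by positivity)] at hω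
  have hk : β / δ * (1 - exp ω) ≤ exp ω := by
    rw [div_le_iff₀ (by positivity)] at hexp
    rw [div_mul_eq_mul_div, div_le_iff₀ hδ]
    linarith
  have h := log_one_sub_exp_add_mul_le hk hωc (by rw [exp_log (by linarith)]; linarith)
  rw [exp_log (by linarith), sub_sub_cancel] at h
  linarith

theorem isThresholdPolicy_of_margin {g : ℝ → ℝ} {β V L M κ : ℝ} (hβ : 0 < β) (hκ : 0 < κ)
    (hLM : L < M) (hM : M < 0)
    (hmargin : ∀ ω ∈ Icc L M, V + κ * (M - ω) ≤ log (1 - exp ω) + β * ω)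
    (hg : ∀ ω, g ω =
      if ω ≤ log (1 - exp (V - β * L)) then L else (V - log (1 - exp ω)) / β) :
    IsThresholdPolicy g L (log (1 - exp (V - β * L))) M := by
  have hexp_lt_one {ω : ℝ} (hω : ω < M) : exp ω < 1 := exp_lt_one_iff.2 (hω.trans hM)
  have hVL : exp (V - β * L) < 1 - exp L := by
    rw [← lt_log_iff_exp_lt (sub_pos.2 (hexp_lt_one hLM))]
    linarith [hmargin L ⟨le_rfl, hLM.le⟩, mul_pos hκ (sub_pos.2 hLM)]
  have hLC : L < log (1 - exp (V - β * L)) := by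
    rw [lt_log_iff_exp_lt (by linarith [exp_pos L])]
    linarith
  refine ⟨hLC.le, fun ω hω => by rw [hg, if_pos hω], ?_, ?_⟩
  · intro ω hCω hωM
    rw [hg, if_neg hCω.not_ge, lt_div_iff₀ hβ]
    rw [log_lt_iff_lt_exp (by linarith [exp_pos L])] at hCω
    have : log (1 - exp ω) < V - β * L := by
      rw [log_lt_iff_lt_exp (sub_pos.2 (hexp_lt_one hωM))]
      linarith
    linarith
  · intro b hbM
    refine ⟨κ * (M - b) / β, div_pos (mul_pos hκ (sub_pos.2 hbM)) hβ, fun ω hCω hωb => ?_⟩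
    rw [hg, if_neg hCω.not_ge, div_le_iff₀ hβ, sub_mul, div_mul_cancel₀ _ hβ.ne']
    have hstep : κ * (M - b) ≤ κ * (M - ω) := by gcongr
    linarith [hmargin ω ⟨(hLC.trans hCω).le, hωb.trans hbM.le⟩]

theorem stmt_7_general (β δ s cmin : ℝ)
    (hβ : β ∈ Set.Ioc (0 : ℝ) 1) (hδ : δ ∈ Set.Ioo (0 : ℝ) 1)
    (hs2 : s < 1)
    (hcmin : cmin ∈ Set.Ioo (0 : ℝ) s)
    (hcmineq : log cmin + β * log (1 - cmin) = log s + β * log (1 - s))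
    (hωlt : log (β / (β + δ)) < log (1 - cmin))
    (g : ℝ → ℝ)
    (hg : ∀ ω, g ω =
      if ω ≤ log (1 - exp ((log s + β * log (1 - s)) - β * log (β / (β + δ))))
      then log (β / (β + δ))
      else ((log s + β * log (1 - s)) - log (1 - exp ω)) / β)
    (ω0 : ℝ) (hω0 : ω0 ∈ Set.Ico (log (1 - s)) (log (1 - cmin)))
    (seq : ℕ → ℝ) (hseq0 : seq 0 = ω0) (hseqrec : ∀ t, seq (t + 1) = g (seq t)) :
    (∃ T : ℕ, 1 ≤ T ∧ ∀ t ≥ T, seq t = log (β / (β + δ))) ∧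
    (log (β / (β + δ)) < ω0 →
      ∀ T : ℕ, seq T = log (β / (β + δ)) →
        (∀ t < T, seq t ≠ log (β / (β + δ))) →
        ∀ t < T, seq (t + 1) < seq t) ∧
    (ω0 ≤ log (β / (β + δ)) → ∀ t : ℕ, 1 ≤ t → seq t = log (β / (β + δ))) := by
  obtain ⟨hβ0, -⟩ := hβ
  obtain ⟨hδ0, hδ1⟩ := hδ
  obtain ⟨hc0, hcs⟩ := hcmin
  have hκ : 0 < β / δ - β := by
    rw [sub_pos, lt_div_iff₀ hδ0]
    nlinarith
  have hM : log (1 - cmin) < 0 := log_neg (by linarith) (by linarith)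
  have hmargin (ω : ℝ) (hω : ω ∈ Icc (log (β / (β + δ))) (log (1 - cmin))) :=
    hcmineq ▸ log_add_mul_log_one_sub_add_mul_le hβ0 hδ0 hc0 (by linarith) hω.1 hω.2
  have hP := isThresholdPolicy_of_margin hβ0 hκ hωlt hM hmargin hg
  subst hseq0
  refine ⟨hP.eventually_eq hseqrec hω0.2, ?_, ?_⟩
  · intro hLω0 T _ hne t ht
    exact hP.succ_lt_of_ne hseqrec hωlt ⟨hLω0.le, hω0.2⟩ (hne t ht)
  · intro hω0L t ht
    exact hP.eq_of_le_threshold hseqrec (hω0L.trans hP.le_threshold) ht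

/-- Deterministic policy dynamics.  With `ω* = log (β/(β+δ)) < ω_max = log (1 - c_min)`
and policy `g ω = ω*` for `ω ≤ ω^c` and `g ω = (υ̂ - log (1 - exp ω))/β` otherwise,
any sequence `ω_{t+1} = g ω_t` starting from `ω₀ ∈ [ω_min, ω_max)` reaches `ω*` in
finite time; it is strictly decreasing until it reaches `ω*` when `ω₀ > ω*`, and it
equals `ω*` from period 1 onward when `ω₀ ≤ ω*`. -/
theorem stmt_7 (β δ s cmin : ℝ)
    (hβ : β ∈ Set.Ioc (0 : ℝ) 1) (hδ : δ ∈ Set.Ioo (0 : ℝ) 1)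
    (hs1 : 1 / (1 + β) < s) (hs2 : s < 1)
    (hcmin : cmin ∈ Set.Ioo (0 : ℝ) s)
    (hcmineq : log cmin + β * log (1 - cmin) = log s + β * log (1 - s))
    (hωlt : log (β / (β + δ)) < log (1 - cmin))
    (g : ℝ → ℝ)
    (hg : ∀ ω, g ω =
      if ω ≤ log (1 - exp ((log s + β * log (1 - s)) - β * log (β / (β + δ))))
      then log (β / (β + δ))
      else ((log s + β * log (1 - s)) - log (1 - exp ω)) / β)
    (ω0 : ℝ) (hω0 : ω0 ∈ Set.Ico (log (1 - s)) (log (1 - cmin)))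
    (seq : ℕ → ℝ) (hseq0 : seq 0 = ω0) (hseqrec : ∀ t, seq (t + 1) = g (seq t)) :
    (∃ T : ℕ, 1 ≤ T ∧ ∀ t ≥ T, seq t = log (β / (β + δ))) ∧
    (log (β / (β + δ)) < ω0 →
      ∀ T : ℕ, seq T = log (β / (β + δ)) →
        (∀ t < T, seq t ≠ log (β / (β + δ))) →
        ∀ t < T, seq (t + 1) < seq t) ∧
    (ω0 ≤ log (β / (β + δ)) → ∀ t : ℕ, 1 ≤ t → seq t = log (β / (β + δ))) :=
  stmt_7_general β δ s cmin hβ hδ hs2 hcmin hcmineq hωlt g hg ω0 hω0 seq hseq0 hseqrec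
end

section
/- Assume ω* < ω_max. Define ω^c_0 := ω* and, recursively, ω^c_n := log(1 − exp(υ̂ − β·ω^c_{n−1})) for n ≥ 1. Then every ω^c_n is well-defined (i.e., exp(υ̂ − β·ω^c_{n−1}) ∈ (0,1) at each step), the sequence (ω^c_n)_{n≥0} is strictly increasing, and lim_{n→∞} ω^c_n = ω_max. -/
open Real

/-- Key convexity lemma: strictly between `log (1-s)` and `log (1-cmin)`,
the function `x ↦ exp x + exp (υ̂ - β x)` is strictly below `1`. -/
lemma aux_glt (β s cmin : ℝ) (hβ0 : 0 < β) (hs0 : 0 < s) (hs2 : s < 1)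
    (hc0 : 0 < cmin) (hc1 : cmin < 1)
    (hcmineq : log cmin + β * log (1 - cmin) = log s + β * log (1 - s))
    (x : ℝ) (hx1 : log (1 - s) < x) (hx2 : x < log (1 - cmin)) :
    exp x + exp ((log s + β * log (1 - s)) - β * x) < 1 := by
  have h1s : (0:ℝ) < 1 - s := by linarith
  have h1c : (0:ℝ) < 1 - cmin := by linarith
  set a := log (1 - s) with ha
  set b := log (1 - cmin) with hb
  have hbapos : 0 < b - a := by linarith
  set t := (b - x) / (b - a) with ht
  have ht0 : 0 < t := div_pos (by linarith) hbapos
  have ht1 : 0 < 1 - t := by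
    have := (div_lt_one hbapos).2 (show b - x < b - a by linarith)
    linarith
  have htsum : t + (1 - t) = 1 := by ring
  have htba : t * (b - a) = b - x := by
    rw [ht]; field_simp
  have hx : t * a + (1 - t) * b = x := by linear_combination -htba
  have hea : exp a = 1 - s := exp_log h1s
  have heb : exp b = 1 - cmin := exp_log h1c
  have key1 : exp x < t * exp a + (1 - t) * exp b := by
    have h := strictConvexOn_exp.2 (Set.mem_univ a) (Set.mem_univ b)
      (show a ≠ b from ne_of_lt (by linarith)) (show 0 < t from ht0)
      (show 0 < 1 - t from ht1) htsum
    rw [smul_eq_mul, smul_eq_mul, smul_eq_mul, smul_eq_mul, hx] at h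
    exact h
  have hva : (log s + β * a) - β * a = log s := by ring
  have hvb : (log s + β * a) - β * b = log cmin := by linear_combination -hcmineq
  have harg : (log s + β * a) - β * x
      = t * ((log s + β * a) - β * a) + (1 - t) * ((log s + β * a) - β * b) := by
    rw [← hx]; ring
  have key2 : exp ((log s + β * a) - β * x)
      ≤ t * exp ((log s + β * a) - β * a)
        + (1 - t) * exp ((log s + β * a) - β * b) := by
    have h := convexOn_exp.2 (Set.mem_univ ((log s + β * a) - β * a))
      (Set.mem_univ ((log s + β * a) - β * b))
      (show (0:ℝ) ≤ t from ht0.le) (show (0:ℝ) ≤ 1 - t from ht1.le) htsum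
    rw [smul_eq_mul, smul_eq_mul, smul_eq_mul, smul_eq_mul, ← harg] at h
    exact h
  rw [hva, hvb, exp_log hs0, exp_log hc0] at key2
  rw [hea, heb] at key1
  nlinarith

/-- With `ω^c_0 = ω* = log (β/(β+δ))` and
`ω^c_{n+1} = log (1 - exp (υ̂ - β ω^c_n))`, every term is well-defined (the inner
exponential lies in `(0,1)`), the sequence is strictly increasing, and it converges
to `ω_max = log (1 - c_min)`. -/
theorem stmt_8 (β δ s cmin : ℝ)
    (hβ : β ∈ Set.Ioc (0 : ℝ) 1) (hδ : δ ∈ Set.Ioo (0 : ℝ) 1)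
    (hs1 : 1 / (1 + β) < s) (hs2 : s < 1)
    (hcmin : cmin ∈ Set.Ioo (0 : ℝ) s)
    (hcmineq : log cmin + β * log (1 - cmin) = log s + β * log (1 - s))
    (hωlt : log (β / (β + δ)) < log (1 - cmin))
    (w : ℕ → ℝ) (hw0 : w 0 = log (β / (β + δ)))
    (hwrec : ∀ n, w (n + 1) = log (1 - exp ((log s + β * log (1 - s)) - β * w n))) :
    (∀ n, exp ((log s + β * log (1 - s)) - β * w n) ∈ Set.Ioo (0 : ℝ) 1) ∧
    StrictMono w ∧
    Filter.Tendsto w Filter.atTop (nhds (log (1 - cmin))) := by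
  obtain ⟨hβ0, hβ1⟩ := hβ
  obtain ⟨hδ0, hδ1⟩ := hδ
  obtain ⟨hc0, hcs⟩ := hcmin
  have hs0 : 0 < s := lt_trans (by positivity) hs1
  have hc1 : cmin < 1 := lt_trans hcs hs2
  set υ := log s + β * log (1 - s) with hυ
  set b := log (1 - cmin) with hb
  -- ω_min < ω*
  have hs1' : 1 < s * (1 + β) := by
    rwa [div_lt_iff₀ (by linarith : (0:ℝ) < 1 + β)] at hs1
  have hstar : log (1 - s) < log (β / (β + δ)) := by
    apply log_lt_log (by linarith)
    rw [lt_div_iff₀ (by linarith : (0:ℝ) < β + δ)]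
    nlinarith [mul_nonneg (by linarith : (0:ℝ) ≤ 1 - s) (by linarith : (0:ℝ) ≤ 1 - δ)]
  -- invariant
  have key : ∀ n, log (β / (β + δ)) ≤ w n ∧ w n < b := by
    intro n; induction n with
    | zero => exact ⟨hw0.ge, by rw [hw0]; exact hωlt⟩
    | succ n ih =>
      obtain ⟨h1, h2⟩ := ih
      have hmin : log (1 - s) < w n := lt_of_lt_of_le hstar h1
      have hg := aux_glt β s cmin hβ0 hs0 hs2 hc0 hc1 hcmineq (w n) hmin h2
      have hlt : w n < w (n + 1) := by
        calc w n = log (exp (w n)) := (log_exp _).symm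
        _ < log (1 - exp (υ - β * w n)) :=
            log_lt_log (exp_pos _) (by linarith [exp_pos (υ - β * w n)])
        _ = w (n + 1) := (hwrec n).symm
      refine ⟨le_trans h1 hlt.le, ?_⟩
      have hclt : cmin < exp (υ - β * w n) := by
        rw [← exp_log hc0]
        apply exp_lt_exp.2
        have hmul : β * w n < β * b := (mul_lt_mul_iff_right₀ hβ0).2 h2
        have hlc : log cmin = υ - β * b := by rw [← hcmineq]; ring
        linarith
      rw [hwrec n, hb]
      exact log_lt_log (by linarith [exp_pos (w n)]) (by linarith)
  have hg : ∀ n, exp (w n) + exp (υ - β * w n) < 1 := fun n =>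
    aux_glt β s cmin hβ0 hs0 hs2 hc0 hc1 hcmineq (w n)
      (lt_of_lt_of_le hstar (key n).1) (key n).2
  have hstep : ∀ n, w n < w (n + 1) := by
    intro n
    calc w n = log (exp (w n)) := (log_exp _).symm
    _ < log (1 - exp (υ - β * w n)) :=
        log_lt_log (exp_pos _) (by linarith [hg n, exp_pos (υ - β * w n)])
    _ = w (n + 1) := (hwrec n).symm
  have hsm : StrictMono w := strictMono_nat_of_lt_succ hstep
  refine ⟨fun n => ⟨exp_pos _, by linarith [hg n, exp_pos (w n)]⟩, hsm, ?_⟩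
  -- convergence
  have hbdd : BddAbove (Set.range w) := ⟨b, by rintro _ ⟨n, rfl⟩; exact (key n).2.le⟩
  have hlim : Filter.Tendsto w Filter.atTop (nhds (⨆ n, w n)) :=
    tendsto_atTop_ciSup hsm.monotone hbdd
  set L := ⨆ n, w n with hL
  have hLb : L ≤ b := ciSup_le fun n => (key n).2.le
  have hLstar : log (β / (β + δ)) ≤ L := le_trans (key 0).1 (le_ciSup hbdd 0)
  have hLeq : L = b := by
    by_contra h
    have hLlt : L < b := lt_of_le_of_ne hLb h
    have hgL : exp L + exp (υ - β * L) < 1 :=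
      aux_glt β s cmin hβ0 hs0 hs2 hc0 hc1 hcmineq L
        (lt_of_lt_of_le hstar hLstar) hLlt
    have hpos : 0 < 1 - exp (υ - β * L) := by linarith [exp_pos L]
    have hne : (1 : ℝ) - exp (υ - β * L) ≠ 0 := ne_of_gt hpos
    have hin : ContinuousAt (fun x : ℝ => 1 - exp (υ - β * x)) L := by fun_prop
    have hinner : Filter.Tendsto (fun n => 1 - exp (υ - β * w n)) Filter.atTop
        (nhds (1 - exp (υ - β * L))) := hin.tendsto.comp hlim
    have h1 : Filter.Tendsto (fun n => w (n + 1)) Filter.atTop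
        (nhds (log (1 - exp (υ - β * L)))) := by
      have ht := (Real.continuousAt_log hne).tendsto.comp hinner
      have heq : (fun n => w (n + 1)) = Real.log ∘ (fun n => 1 - exp (υ - β * w n)) :=
        funext fun n => hwrec n
      rw [heq]; exact ht
    have h2 : Filter.Tendsto (fun n => w (n + 1)) Filter.atTop (nhds L) :=
      hlim.comp (Filter.tendsto_add_atTop_nat 1)
    have hfix : log (1 - exp (υ - β * L)) = L := tendsto_nhds_unique h1 h2
    have hexp : exp L = 1 - exp (υ - β * L) := by
      calc exp L = exp (log (1 - exp (υ - β * L))) := by rw [hfix]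
      _ = 1 - exp (υ - β * L) := exp_log hpos
    linarith
  rw [← hLeq]; exact hlim
end

section
/- For every ω ∈ [log(1 − s(i₀)), ω_max(i₀)], the set of sustainable plans with log(1 − c((i₀))) ≥ ω is nonempty and the planner's payoff V(c) is uniformly bounded on it, so that W(ω) is a finite real number; moreover the value function W is nonincreasing and concave on the interval [log(1 − s(i₀)), ω_max(i₀)]. -/
open Real

/-- The last state of the history obtained by following the states in `σ` after the
initial state `i₀`. -/
def lastState {I : ℕ} (i₀ : Fin I) (σ : List (Fin I)) : Fin I :=
  (i₀ :: σ).getLast (List.cons_ne_nil _ _)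

/-- Lifetime utility gain over autarky of the generation born at history `σ`
(the list of states realized after the initial state `i₀`). -/
noncomputable def lifetimeGain {I : ℕ} (p s : Fin I → ℝ) (β : ℝ) (i₀ : Fin I)
    (c : List (Fin I) → ℝ) (σ : List (Fin I)) : ℝ :=
  log (c σ) - log (s (lastState i₀ σ)) +
    β * ∑ r, p r * (log (1 - c (σ ++ [r])) - log (1 - s r))

/-- A plan is sustainable if consumption shares are feasible (in `(0, s iₜ]` at every
history) and the lifetime utility gain over autarky is nonnegative at every history. -/
def Sustainable {I : ℕ} (p s : Fin I → ℝ) (β : ℝ) (i₀ : Fin I)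
    (c : List (Fin I) → ℝ) : Prop :=
  (∀ σ : List (Fin I), 0 < c σ ∧ c σ ≤ s (lastState i₀ σ)) ∧
  (∀ σ : List (Fin I), 0 ≤ lifetimeGain p s β i₀ c σ)

/-- The planner's payoff: the initial old's utility gain weighted by `β/δ` plus the
`δ`-discounted sum over dates of the expected lifetime utility gains, where a history
of length `t` after the initial state is a tuple `σ : Fin t → Fin I` with probability
weight `∏ k, p (σ k)`. -/
noncomputable def plannerPayoff {I : ℕ} (p s : Fin I → ℝ) (β δ : ℝ) (i₀ : Fin I)
    (c : List (Fin I) → ℝ) : ℝ :=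
  (β / δ) * (log (1 - c []) - log (1 - s i₀)) +
    ∑' t : ℕ, δ ^ t * ∑ σ : Fin t → Fin I,
      (∏ k, p (σ k)) * lifetimeGain p s β i₀ c (List.ofFn σ)

/-- The value function: the supremum of the planner's payoff over sustainable plans
promising the initial old at least `ω`. -/
noncomputable def W {I : ℕ} (p s : Fin I → ℝ) (β δ : ℝ) (i₀ : Fin I) (ω : ℝ) : ℝ :=
  sSup {v : ℝ | ∃ c : List (Fin I) → ℝ, Sustainable p s β i₀ c ∧
    ω ≤ log (1 - c []) ∧ plannerPayoff p s β δ i₀ c = v}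

namespace Stmt10Aux

variable {I : ℕ} {p s : Fin I → ℝ} {β δ : ℝ} {i₀ : Fin I}

lemma lastState_nil (i₀ : Fin I) : lastState i₀ [] = i₀ := rfl

lemma lastState_append (i₀ : Fin I) (σ : List (Fin I)) (r : Fin I) :
    lastState i₀ (σ ++ [r]) = r := by
  simp [lastState, List.getLast_append]

/-- The uniform bound on lifetime gains. -/
noncomputable def K (p s : Fin I → ℝ) (β : ℝ) : ℝ :=
  β * ∑ r, p r * (-log (1 - s r))

section Bounds

variable (hp : ∀ i, 0 < p i) (hpsum : ∑ i, p i = 1)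
    (hs : ∀ i, s i ∈ Set.Ioo (0 : ℝ) 1) (hβ : β ∈ Set.Ioc (0 : ℝ) 1)
    (hδ : δ ∈ Set.Ioo (0 : ℝ) 1)

include hs in
lemma K_nonneg (hp : ∀ i, 0 < p i) (hβ : 0 < β) : 0 ≤ K p s β := by
  apply mul_nonneg hβ.le
  apply Finset.sum_nonneg
  intro r _
  have h1 : log (1 - s r) ≤ 0 :=
    Real.log_nonpos (by linarith [(hs r).2]) (by linarith [(hs r).1])
  have := (hp r).le
  nlinarith

include hp hs in
lemma gain_le (hβ : 0 < β) {c : List (Fin I) → ℝ}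
    (hfeas : ∀ σ, 0 < c σ ∧ c σ ≤ s (lastState i₀ σ)) (σ : List (Fin I)) :
    lifetimeGain p s β i₀ c σ ≤ K p s β := by
  unfold lifetimeGain K
  have h1 : log (c σ) - log (s (lastState i₀ σ)) ≤ 0 := by
    have := Real.log_le_log (hfeas σ).1 (hfeas σ).2
    linarith
  have h2 : ∀ r ∈ Finset.univ, p r * (log (1 - c (σ ++ [r])) - log (1 - s r)) ≤
      p r * (-log (1 - s r)) := by
    intro r _
    have hcr := hfeas (σ ++ [r])
    rw [lastState_append] at hcr
    have hlog : log (1 - c (σ ++ [r])) ≤ 0 :=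
      Real.log_nonpos (by linarith [(hs r).2, hcr.2]) (by linarith [hcr.1])
    have := (hp r).le
    nlinarith
  have hsum := Finset.sum_le_sum h2
  nlinarith [hsum]

/-- expected gain at date `t` -/
noncomputable def A (p s : Fin I → ℝ) (β : ℝ) (i₀ : Fin I) (c : List (Fin I) → ℝ)
    (t : ℕ) : ℝ :=
  ∑ σ : Fin t → Fin I, (∏ k, p (σ k)) * lifetimeGain p s β i₀ c (List.ofFn σ)

include hp hpsum hs in
lemma A_bounds (hβ : 0 < β) {c : List (Fin I) → ℝ}
    (hc : Sustainable p s β i₀ c) (t : ℕ) :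
    0 ≤ A p s β i₀ c t ∧ A p s β i₀ c t ≤ K p s β := by
  have hprob : ∀ σ : Fin t → Fin I, (0:ℝ) ≤ ∏ k, p (σ k) :=
    fun σ => Finset.prod_nonneg fun k _ => (hp (σ k)).le
  constructor
  · exact Finset.sum_nonneg fun σ _ => mul_nonneg (hprob σ) (hc.2 _)
  · have h1 : A p s β i₀ c t ≤ ∑ σ : Fin t → Fin I, (∏ k, p (σ k)) * K p s β :=
      Finset.sum_le_sum fun σ _ =>
        mul_le_mul_of_nonneg_left (gain_le hp hs hβ hc.1 _) (hprob σ)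
    have h2 : ∑ σ : Fin t → Fin I, (∏ k, p (σ k)) = 1 := by
      rw [← Fintype.sum_pow p t, hpsum, one_pow]
    calc A p s β i₀ c t ≤ ∑ σ : Fin t → Fin I, (∏ k, p (σ k)) * K p s β := h1
      _ = (∑ σ : Fin t → Fin I, ∏ k, p (σ k)) * K p s β := by
          rw [Finset.sum_mul]
      _ = K p s β := by rw [h2, one_mul]

include hp hpsum hs hδ in
lemma A_summable (hβ : 0 < β) {c : List (Fin I) → ℝ}
    (hc : Sustainable p s β i₀ c) :
    Summable (fun t : ℕ => δ ^ t * A p s β i₀ c t) := by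
  apply Summable.of_nonneg_of_le
    (fun t => mul_nonneg (pow_nonneg hδ.1.le _) (A_bounds hp hpsum hs hβ hc t).1)
    (fun t => ?_) ((summable_geometric_of_lt_one hδ.1.le hδ.2).mul_left (K p s β))
  calc δ ^ t * A p s β i₀ c t ≤ δ ^ t * K p s β :=
        mul_le_mul_of_nonneg_left (A_bounds hp hpsum hs hβ hc t).2 (pow_nonneg hδ.1.le _)
    _ = K p s β * δ ^ t := mul_comm _ _

include hp hpsum hs hδ in
lemma payoff_abs_le (hβ : 0 < β) {c : List (Fin I) → ℝ}
    (hc : Sustainable p s β i₀ c) :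
    |plannerPayoff p s β δ i₀ c| ≤
      (β / δ) * (-log (1 - s i₀)) + K p s β * (1 - δ)⁻¹ := by
  have hc0 := hc.1 []
  rw [lastState_nil] at hc0
  have hsi := hs i₀
  -- bound on first part
  have hd1 : 0 ≤ log (1 - c []) - log (1 - s i₀) := by
    have := Real.log_le_log (by linarith [hsi.2] : (0:ℝ) < 1 - s i₀)
      (by linarith [hc0.2] : 1 - s i₀ ≤ 1 - c [])
    linarith
  have hd2 : log (1 - c []) ≤ 0 := Real.log_nonpos (by linarith [hc0.2, hsi.2]) (by linarith [hc0.1])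
  have hlsi : log (1 - s i₀) ≤ 0 := Real.log_nonpos (by linarith [hsi.2]) (by linarith [hsi.1])
  have hβδ : 0 ≤ β / δ := div_nonneg hβ.le hδ.1.le
  have hfirst : |(β / δ) * (log (1 - c []) - log (1 - s i₀))| ≤ (β / δ) * (-log (1 - s i₀)) := by
    rw [abs_mul, abs_of_nonneg hβδ, abs_of_nonneg hd1]
    apply mul_le_mul_of_nonneg_left _ hβδ
    linarith
  -- bound on the series
  have hsumm := A_summable hp hpsum hs hδ hβ hc
  have htsum0 : 0 ≤ ∑' t : ℕ, δ ^ t * A p s β i₀ c t :=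
    tsum_nonneg fun t => mul_nonneg (pow_nonneg hδ.1.le _) (A_bounds hp hpsum hs hβ hc t).1
  have htsum1 : ∑' t : ℕ, δ ^ t * A p s β i₀ c t ≤ K p s β * (1 - δ)⁻¹ := by
    have hgeo : Summable (fun t : ℕ => K p s β * δ ^ t) :=
      (summable_geometric_of_lt_one hδ.1.le hδ.2).mul_left _
    have := Summable.tsum_le_tsum (f := fun t : ℕ => δ ^ t * A p s β i₀ c t)
      (g := fun t : ℕ => K p s β * δ ^ t)
      (fun t => by
        calc δ ^ t * A p s β i₀ c t ≤ δ ^ t * K p s β :=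
            mul_le_mul_of_nonneg_left (A_bounds hp hpsum hs hβ hc t).2 (pow_nonneg hδ.1.le _)
          _ = K p s β * δ ^ t := mul_comm _ _) hsumm hgeo
    rwa [tsum_mul_left, tsum_geometric_of_lt_one hδ.1.le hδ.2] at this
  have habs2 : |∑' t : ℕ, δ ^ t * A p s β i₀ c t| ≤ K p s β * (1 - δ)⁻¹ := by
    rw [abs_of_nonneg htsum0]; exact htsum1
  calc |plannerPayoff p s β δ i₀ c|
      ≤ |(β / δ) * (log (1 - c []) - log (1 - s i₀))| +
        |∑' t : ℕ, δ ^ t * A p s β i₀ c t| := abs_add_le _ _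
    _ ≤ (β / δ) * (-log (1 - s i₀)) + K p s β * (1 - δ)⁻¹ := add_le_add hfirst habs2

end Bounds


section Plans

variable (hp : ∀ i, 0 < p i) (hpsum : ∑ i, p i = 1)
    (hs : ∀ i, s i ∈ Set.Ioo (0 : ℝ) 1) (hβ : β ∈ Set.Ioc (0 : ℝ) 1)
    (hδ : δ ∈ Set.Ioo (0 : ℝ) 1)

include hs in
lemma stationary_sustainable (hβ : 0 < β) {Δ : ℝ} (hΔpos : 0 < Δ)
    (hΔeq : Δ = ∑ r, p r * (log (1 - s r * exp (-(β * Δ))) - log (1 - s r))) :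
    Sustainable p s β i₀ (fun σ => s (lastState i₀ σ) * exp (-(β * Δ))) := by
  have hepos : 0 < exp (-(β * Δ)) := exp_pos _
  have hele : exp (-(β * Δ)) ≤ 1 := exp_le_one_iff.2 (by nlinarith)
  constructor
  · intro σ
    refine ⟨mul_pos (hs _).1 hepos, ?_⟩
    calc s (lastState i₀ σ) * exp (-(β * Δ)) ≤ s (lastState i₀ σ) * 1 :=
        mul_le_mul_of_nonneg_left hele (hs _).1.le
      _ = s (lastState i₀ σ) := mul_one _
  · intro σ
    unfold lifetimeGain
    have h1 : log (s (lastState i₀ σ) * exp (-(β * Δ))) - log (s (lastState i₀ σ))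
        = -(β * Δ) := by
      rw [Real.log_mul (hs _).1.ne' hepos.ne', Real.log_exp]; ring
    have h2 : ∀ r : Fin I,
        ((fun σ => s (lastState i₀ σ) * exp (-(β * Δ))) (σ ++ [r])) =
          s r * exp (-(β * Δ)) := by
      intro r; simp only []; rw [lastState_append]
    simp only [h2]
    rw [h1, ← hΔeq]
    ring_nf
    linarith

include hp hpsum hs in
lemma mix_plan (hβ : 0 < β) (hδ : δ ∈ Set.Ioo (0:ℝ) 1)
    {c₁ c₂ : List (Fin I) → ℝ} (h₁ : Sustainable p s β i₀ c₁)
    (h₂ : Sustainable p s β i₀ c₂) {a b : ℝ} (ha : 0 < a) (hb : 0 < b)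
    (hab : a + b = 1) :
    ∃ c : List (Fin I) → ℝ, Sustainable p s β i₀ c ∧
      (∀ σ, a * log (1 - c₁ σ) + b * log (1 - c₂ σ) ≤ log (1 - c σ)) ∧
      a * plannerPayoff p s β δ i₀ c₁ + b * plannerPayoff p s β δ i₀ c₂ ≤
        plannerPayoff p s β δ i₀ c := by
  obtain rfl : b = 1 - a := by linarith
  set c : List (Fin I) → ℝ := fun σ => c₁ σ ^ a * c₂ σ ^ (1 - a) with hc_def
  have ha' : (0:ℝ) ≤ 1 - a := by linarith
  have hfeas : ∀ σ, 0 < c σ ∧ c σ ≤ s (lastState i₀ σ) := by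
    intro σ
    obtain ⟨h1p, h1le⟩ := h₁.1 σ
    obtain ⟨h2p, h2le⟩ := h₂.1 σ
    refine ⟨mul_pos (rpow_pos_of_pos h1p a) (rpow_pos_of_pos h2p (1-a)), ?_⟩
    calc c₁ σ ^ a * c₂ σ ^ (1-a) ≤ s (lastState i₀ σ) ^ a * s (lastState i₀ σ) ^ (1-a) := by
          apply mul_le_mul (Real.rpow_le_rpow h1p.le h1le ha.le)
            (Real.rpow_le_rpow h2p.le h2le ha')
            (rpow_pos_of_pos h2p (1-a)).le (rpow_pos_of_pos ((hs _).1) a).le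
      _ = s (lastState i₀ σ) := by
          rw [← Real.rpow_add (hs _).1]
          norm_num
  have hlt1 : ∀ σ, c σ < 1 := fun σ => lt_of_le_of_lt (hfeas σ).2 (hs _).2
  have h1lt1 : ∀ σ, c₁ σ < 1 := fun σ => lt_of_le_of_lt (h₁.1 σ).2 (hs _).2
  have h2lt1 : ∀ σ, c₂ σ < 1 := fun σ => lt_of_le_of_lt (h₂.1 σ).2 (hs _).2
  have hlog1 : ∀ σ, a * log (1 - c₁ σ) + (1-a) * log (1 - c₂ σ) ≤ log (1 - c σ) := by
    intro σ
    have hmean : c σ ≤ a * c₁ σ + (1-a) * c₂ σ :=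
      Real.geom_mean_le_arith_mean2_weighted ha.le ha' (h₁.1 σ).1.le (h₂.1 σ).1.le (by ring)
    have hmean2 : (1 - c₁ σ) ^ a * (1 - c₂ σ) ^ (1-a) ≤ a * (1 - c₁ σ) + (1-a) * (1 - c₂ σ) :=
      Real.geom_mean_le_arith_mean2_weighted ha.le ha' (by linarith [h1lt1 σ])
        (by linarith [h2lt1 σ]) (by ring)
    have hge : (1 - c₁ σ) ^ a * (1 - c₂ σ) ^ (1-a) ≤ 1 - c σ := by nlinarith
    have hpos1 : (0:ℝ) < 1 - c₁ σ := by linarith [h1lt1 σ]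
    have hpos2 : (0:ℝ) < 1 - c₂ σ := by linarith [h2lt1 σ]
    have := Real.log_le_log (mul_pos (rpow_pos_of_pos hpos1 a) (rpow_pos_of_pos hpos2 (1-a))) hge
    rwa [Real.log_mul (rpow_pos_of_pos hpos1 a).ne' (rpow_pos_of_pos hpos2 (1-a)).ne',
      Real.log_rpow hpos1, Real.log_rpow hpos2] at this
  have hlogc : ∀ σ, log (c σ) = a * log (c₁ σ) + (1-a) * log (c₂ σ) := by
    intro σ
    rw [hc_def]
    simp only []
    rw [Real.log_mul (rpow_pos_of_pos (h₁.1 σ).1 a).ne' (rpow_pos_of_pos (h₂.1 σ).1 (1-a)).ne',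
      Real.log_rpow (h₁.1 σ).1, Real.log_rpow (h₂.1 σ).1]
  have hgain : ∀ σ, a * lifetimeGain p s β i₀ c₁ σ + (1-a) * lifetimeGain p s β i₀ c₂ σ ≤
      lifetimeGain p s β i₀ c σ := by
    intro σ
    unfold lifetimeGain
    have hsumle : ∑ r, p r * (a * (log (1 - c₁ (σ ++ [r])) - log (1 - s r)) +
          (1-a) * (log (1 - c₂ (σ ++ [r])) - log (1 - s r))) ≤
        ∑ r, p r * (log (1 - c (σ ++ [r])) - log (1 - s r)) := by
      apply Finset.sum_le_sum
      intro r _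
      apply mul_le_mul_of_nonneg_left _ (hp r).le
      linarith [hlog1 (σ ++ [r])]
    have hexp : a * (β * ∑ r, p r * (log (1 - c₁ (σ ++ [r])) - log (1 - s r))) +
          (1-a) * (β * ∑ r, p r * (log (1 - c₂ (σ ++ [r])) - log (1 - s r))) =
        β * ∑ r, p r * (a * (log (1 - c₁ (σ ++ [r])) - log (1 - s r)) +
          (1-a) * (log (1 - c₂ (σ ++ [r])) - log (1 - s r))) := by
      simp only [Finset.mul_sum, ← Finset.sum_add_distrib]
      exact Finset.sum_congr rfl fun r _ => by ring
    have hβsum : β * ∑ r, p r * (a * (log (1 - c₁ (σ ++ [r])) - log (1 - s r)) +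
          (1-a) * (log (1 - c₂ (σ ++ [r])) - log (1 - s r))) ≤
        β * ∑ r, p r * (log (1 - c (σ ++ [r])) - log (1 - s r)) :=
      mul_le_mul_of_nonneg_left hsumle hβ.le
    have hlc := hlogc σ
    linarith [hβsum, hexp, hlc]
  have hsust : Sustainable p s β i₀ c := by
    refine ⟨hfeas, fun σ => le_trans ?_ (hgain σ)⟩
    have ha1 := mul_nonneg ha.le (h₁.2 σ)
    have ha2 := mul_nonneg ha' (h₂.2 σ)
    linarith
  refine ⟨c, hsust, hlog1, ?_⟩
  unfold plannerPayoff
  have hβδ : 0 ≤ β / δ := div_nonneg hβ.le hδ.1.le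
  have hfirst : a * ((β / δ) * (log (1 - c₁ []) - log (1 - s i₀))) +
      (1-a) * ((β / δ) * (log (1 - c₂ []) - log (1 - s i₀))) ≤
      (β / δ) * (log (1 - c []) - log (1 - s i₀)) := by
    have h := mul_le_mul_of_nonneg_left (hlog1 []) hβδ
    nlinarith [h]
  have hsum₁ := A_summable hp hpsum hs hδ hβ h₁
  have hsum₂ := A_summable hp hpsum hs hδ hβ h₂
  have hsumc := A_summable hp hpsum hs hδ hβ hsust
  have hAle : ∀ t : ℕ, a * (δ ^ t * A p s β i₀ c₁ t) + (1-a) * (δ ^ t * A p s β i₀ c₂ t) ≤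
      δ ^ t * A p s β i₀ c t := by
    intro t
    have hA : a * A p s β i₀ c₁ t + (1-a) * A p s β i₀ c₂ t ≤ A p s β i₀ c t := by
      unfold A
      rw [Finset.mul_sum, Finset.mul_sum, ← Finset.sum_add_distrib]
      apply Finset.sum_le_sum
      intro σ _
      have hprob : (0:ℝ) ≤ ∏ k, p (σ k) := Finset.prod_nonneg fun k _ => (hp (σ k)).le
      have h := mul_le_mul_of_nonneg_left (hgain (List.ofFn σ)) hprob
      nlinarith [h]
    have hδt : (0:ℝ) ≤ δ ^ t := pow_nonneg hδ.1.le _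
    have h := mul_le_mul_of_nonneg_left hA hδt
    nlinarith [h]
  have htsum : ∑' t : ℕ, (a * (δ ^ t * A p s β i₀ c₁ t) +
      (1-a) * (δ ^ t * A p s β i₀ c₂ t)) ≤
      ∑' t : ℕ, δ ^ t * A p s β i₀ c t :=
    Summable.tsum_le_tsum hAle ((hsum₁.mul_left a).add (hsum₂.mul_left (1-a))) hsumc
  rw [Summable.tsum_add (hsum₁.mul_left a) (hsum₂.mul_left (1-a)), tsum_mul_left, tsum_mul_left] at htsum
  show a * ((β / δ) * (log (1 - c₁ []) - log (1 - s i₀)) + ∑' t : ℕ, δ ^ t * A p s β i₀ c₁ t) +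
      (1-a) * ((β / δ) * (log (1 - c₂ []) - log (1 - s i₀)) + ∑' t : ℕ, δ ^ t * A p s β i₀ c₂ t) ≤
      (β / δ) * (log (1 - c []) - log (1 - s i₀)) + ∑' t : ℕ, δ ^ t * A p s β i₀ c t
  nlinarith [hfirst, htsum]

end Plans

end Stmt10Aux

/-- For every `ω ∈ [log (1 - s i₀), ω_max i₀]` the set of sustainable plans with
`log (1 - c ([])) ≥ ω` is nonempty and the planner's payoff is uniformly bounded on
it (so `W ω` is a finite real number); moreover `W` is nonincreasing and concave on
this interval, where `ω_max i₀ = log (1 - s i₀ * exp (-(β * Δ)))` and `Δ` is the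
unique positive solution of the fixed-point equation. -/
theorem stmt_10 (I : ℕ) (hI : 2 ≤ I) (p s : Fin I → ℝ)
    (hp : ∀ i, 0 < p i) (hpsum : ∑ i, p i = 1)
    (hs : ∀ i, s i ∈ Set.Ioo (0 : ℝ) 1)
    (β δ : ℝ) (hβ : β ∈ Set.Ioc (0 : ℝ) 1) (hδ : δ ∈ Set.Ioo (0 : ℝ) 1)
    (hsus : 1 < β * ∑ i, p i * (s i / (1 - s i)))
    (Δ : ℝ) (hΔpos : 0 < Δ)
    (hΔeq : Δ = ∑ r, p r * (log (1 - s r * exp (-(β * Δ))) - log (1 - s r)))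
    (i₀ : Fin I) :
    (∀ ω ∈ Set.Icc (log (1 - s i₀)) (log (1 - s i₀ * exp (-(β * Δ)))),
      (∃ c : List (Fin I) → ℝ, Sustainable p s β i₀ c ∧ ω ≤ log (1 - c [])) ∧
      (∃ M : ℝ, ∀ c : List (Fin I) → ℝ, Sustainable p s β i₀ c →
        ω ≤ log (1 - c []) → |plannerPayoff p s β δ i₀ c| ≤ M)) ∧
    AntitoneOn (W p s β δ i₀)
      (Set.Icc (log (1 - s i₀)) (log (1 - s i₀ * exp (-(β * Δ))))) ∧
    ConcaveOn ℝ (Set.Icc (log (1 - s i₀)) (log (1 - s i₀ * exp (-(β * Δ)))))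
      (W p s β δ i₀) := by
  obtain ⟨hβ0, hβ1⟩ := hβ
  have hδ' := hδ
  set L := log (1 - s i₀) with hL
  set ωmax := log (1 - s i₀ * exp (-(β * Δ))) with hωmax
  set S : ℝ → Set ℝ := fun ω => {v : ℝ | ∃ c : List (Fin I) → ℝ,
    Sustainable p s β i₀ c ∧ ω ≤ log (1 - c []) ∧ plannerPayoff p s β δ i₀ c = v} with hS
  have hW : ∀ ω, W p s β δ i₀ ω = sSup (S ω) := fun _ => rfl
  -- existence via the stationary plan
  have hstat := Stmt10Aux.stationary_sustainable (i₀ := i₀) hs hβ0 hΔpos hΔeq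
  have hstatω : ωmax = log (1 - (fun σ => s (lastState i₀ σ) * exp (-(β * Δ))) []) := by
    rw [hωmax]
    rfl
  have hexists : ∀ ω ∈ Set.Icc L ωmax,
      ∃ c, Sustainable p s β i₀ c ∧ ω ≤ log (1 - c []) :=
    fun ω hω => ⟨_, hstat, hstatω ▸ hω.2⟩
  -- uniform bound
  set M0 : ℝ := (β / δ) * (-log (1 - s i₀)) + Stmt10Aux.K p s β * (1 - δ)⁻¹ with hM0
  have hboundM : ∀ c, Sustainable p s β i₀ c → |plannerPayoff p s β δ i₀ c| ≤ M0 :=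
    fun c hc => Stmt10Aux.payoff_abs_le hp hpsum hs hδ' hβ0 hc
  have hSbdd : ∀ ω, BddAbove (S ω) := by
    intro ω
    refine ⟨M0, fun v hv => ?_⟩
    obtain ⟨c, hc, -, hveq⟩ := hv
    exact hveq ▸ (abs_le.1 (hboundM c hc)).2
  have hSne : ∀ ω ∈ Set.Icc L ωmax, (S ω).Nonempty := by
    intro ω hω
    obtain ⟨c, hc, hω'⟩ := hexists ω hω
    exact ⟨plannerPayoff p s β δ i₀ c, c, hc, hω', rfl⟩
  refine ⟨fun ω hω => ⟨hexists ω hω, M0, fun c hc _ => hboundM c hc⟩, ?_, ?_⟩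
  · -- antitone
    intro x hx y hy hxy
    rw [hW, hW]
    exact csSup_le_csSup (hSbdd x) (hSne y hy)
      (fun v hv => by obtain ⟨c, hc, hωc, hveq⟩ := hv; exact ⟨c, hc, le_trans hxy hωc, hveq⟩)
  · -- concave
    refine ⟨convex_Icc _ _, ?_⟩
    intro x hx y hy a b ha hb hab
    simp only [smul_eq_mul]
    rcases eq_or_lt_of_le ha with rfl | ha'
    · have hb1 : b = 1 := by linarith
      subst hb1
      simp
    rcases eq_or_lt_of_le hb with rfl | hb'
    · have ha1 : a = 1 := by linarith
      subst ha1
      simp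
    have hz : a * x + b * y ∈ Set.Icc L ωmax := by
      have h1 := mul_le_mul_of_nonneg_left hx.1 ha
      have h2 := mul_le_mul_of_nonneg_left hy.1 hb
      have h3 := mul_le_mul_of_nonneg_left hx.2 ha
      have h4 := mul_le_mul_of_nonneg_left hy.2 hb
      have hLc : a * L + b * L = L := by rw [← add_mul, hab, one_mul]
      have hMc : a * ωmax + b * ωmax = ωmax := by rw [← add_mul, hab, one_mul]
      exact ⟨by linarith, by linarith⟩
    rw [hW, hW, hW]
    have key : ∀ v₁ ∈ S x, ∀ v₂ ∈ S y, a * v₁ + b * v₂ ≤ sSup (S (a * x + b * y)) := by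
      intro v₁ h₁ v₂ h₂
      obtain ⟨c₁, hc₁, hω₁, hv₁⟩ := h₁
      obtain ⟨c₂, hc₂, hω₂, hv₂⟩ := h₂
      obtain ⟨c, hc, hlog, hpay⟩ :=
        Stmt10Aux.mix_plan hp hpsum hs hβ0 hδ' hc₁ hc₂ ha' hb' hab
      have hmem : plannerPayoff p s β δ i₀ c ∈ S (a * x + b * y) := by
        refine ⟨c, hc, ?_, rfl⟩
        have h1 : a * x ≤ a * log (1 - c₁ []) := mul_le_mul_of_nonneg_left hω₁ ha'.le
        have h2 : b * y ≤ b * log (1 - c₂ []) := mul_le_mul_of_nonneg_left hω₂ hb'.le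
        linarith [hlog []]
      calc a * v₁ + b * v₂ = a * plannerPayoff p s β δ i₀ c₁ +
            b * plannerPayoff p s β δ i₀ c₂ := by rw [hv₁, hv₂]
        _ ≤ plannerPayoff p s β δ i₀ c := hpay
        _ ≤ sSup (S (a * x + b * y)) := le_csSup (hSbdd _) hmem
    have step1 : ∀ v₁ ∈ S x, a * v₁ + b * sSup (S y) ≤ sSup (S (a * x + b * y)) := by
      intro v₁ h₁
      have h2 : sSup (S y) ≤ (sSup (S (a * x + b * y)) - a * v₁) / b := by
        apply csSup_le (hSne y hy)
        intro v₂ h₂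
        rw [le_div_iff₀ hb']
        linarith [key v₁ h₁ v₂ h₂]
      have := (le_div_iff₀ hb').1 h2
      linarith
    have h3 : sSup (S x) ≤ (sSup (S (a * x + b * y)) - b * sSup (S y)) / a := by
      apply csSup_le (hSne x hx)
      intro v₁ h₁
      rw [le_div_iff₀ ha']
      linarith [step1 v₁ h₁]
    have := (le_div_iff₀ ha').1 h3
    linarith
end

section
/- The distribution φ given by φ(1,n) = π²·(1−π)^n and φ(2,n) = π·(1−π)^{n+1} for n ∈ ℕ is a probability distribution on {1,2}×ℕ, and it is the unique invariant probability distribution of the Markov chain described in the context. -/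
/-- Transition probabilities of the Markov chain on `Fin 2 × ℕ` (state `0` stands for
endowment state 1, state `1` for endowment state 2, the second coordinate records the
number of consecutive state-2 realizations): from `(0, n)` move to `(0, 0)` with
probability `pr` and to `(1, 0)` with probability `1 - pr`; from `(1, n)` move to
`(0, n+1)` with probability `pr` and to `(1, n+1)` with probability `1 - pr`. -/
noncomputable def transP (pr : ℝ) : Fin 2 × ℕ → Fin 2 × ℕ → ℝ := fun x y =>
  if x.1 = 0 then
    (if y = ((0 : Fin 2), (0 : ℕ)) then pr
     else if y = ((1 : Fin 2), (0 : ℕ)) then 1 - pr else 0)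
  else
    (if y = ((0 : Fin 2), x.2 + 1) then pr
     else if y = ((1 : Fin 2), x.2 + 1) then 1 - pr else 0)

/-- The candidate invariant distribution: `φ (1, n) = π² (1-π)^n` and
`φ (2, n) = π (1-π)^(n+1)`. -/
noncomputable def phiDist (pr : ℝ) : Fin 2 × ℕ → ℝ := fun x =>
  if x.1 = 0 then pr ^ 2 * (1 - pr) ^ x.2 else pr * (1 - pr) ^ (x.2 + 1)

lemma injmk (i : Fin 2) : Function.Injective (fun n : ℕ => (i, n)) :=
  fun a b h => (Prod.ext_iff.1 h).2

lemma fin2 (i : Fin 2) : i = 0 ∨ i = 1 := by fin_cases i <;> simp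

lemma key_col (pr c : ℝ) (j : Fin 2) (ψ : Fin 2 × ℕ → ℝ)
    (hc : c = if j = 0 then pr else 1 - pr) :
    ∑' x : Fin 2 × ℕ, ψ x * transP pr x (j, 0) = (∑' n, ψ ((0 : Fin 2), n)) * c := by
  rw [← tsum_mul_right, ← Function.Injective.tsum_eq (injmk 0)
    (f := fun x => ψ x * transP pr x (j, 0))]
  · apply tsum_congr; intro n
    rcases fin2 j with h | h <;> subst h <;> simp [transP, hc]
  · intro x hx
    rcases fin2 x.1 with h | h
    · exact ⟨x.2, Prod.ext_iff.2 ⟨h.symm, rfl⟩⟩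
    · exact absurd (by simp [transP, h, Prod.ext_iff] : ψ x * transP pr x (j, 0) = 0) hx

lemma key_succ (pr c : ℝ) (j : Fin 2) (n : ℕ) (ψ : Fin 2 × ℕ → ℝ)
    (hc : c = if j = 0 then pr else 1 - pr) :
    ∑' x : Fin 2 × ℕ, ψ x * transP pr x (j, n + 1) = ψ ((1 : Fin 2), n) * c := by
  rw [tsum_eq_single ((1 : Fin 2), n)]
  · rcases fin2 j with h | h <;> subst h <;> simp [transP, hc]
  · intro x hx
    rcases fin2 x.1 with h | h
    · simp [transP, h, Prod.ext_iff]
    · have h2 : x.2 ≠ n := by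
        intro hn; exact hx (Prod.ext_iff.2 ⟨h, hn⟩)
      simp [transP, h, Prod.ext_iff, Ne.symm h2]

lemma phi_eq (pr : ℝ) : phiDist pr = fun x : Fin 2 × ℕ =>
    (if x.1 = 0 then pr ^ 2 else pr * (1 - pr)) * (1 - pr) ^ x.2 := by
  funext x
  simp only [phiDist]
  split <;> ring

/-- `phiDist pr` is a probability distribution on `Fin 2 × ℕ`, it is invariant for the
Markov chain `transP pr`, and it is the unique invariant probability distribution. -/
theorem stmt_11 (pr : ℝ) (hpr : pr ∈ Set.Ioo (0 : ℝ) 1) :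
    ((∀ x, 0 ≤ phiDist pr x) ∧ HasSum (phiDist pr) 1) ∧
    (∀ y, ∑' x : Fin 2 × ℕ, phiDist pr x * transP pr x y = phiDist pr y) ∧
    (∀ ψ : Fin 2 × ℕ → ℝ, (∀ x, 0 ≤ ψ x) → HasSum ψ 1 →
      (∀ y, ∑' x : Fin 2 × ℕ, ψ x * transP pr x y = ψ y) → ψ = phiDist pr) := by
  obtain ⟨hp0, hp1⟩ := hpr
  have hr0 : (0 : ℝ) ≤ 1 - pr := by linarith
  have hr1 : 1 - pr < 1 := by linarith
  have hgeom : HasSum (fun n : ℕ => (1 - pr) ^ n) pr⁻¹ := by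
    have := hasSum_geometric_of_lt_one hr0 hr1
    simpa using this
  have hne : pr ≠ 0 := ne_of_gt hp0
  -- fiber sums of phiDist
  have htsum0 : ∑' n, phiDist pr ((0 : Fin 2), n) = pr := by
    have he : (fun n : ℕ => phiDist pr ((0 : Fin 2), n)) = fun n => pr ^ 2 * (1 - pr) ^ n := by
      funext n; simp [phiDist]
    rw [he, tsum_mul_left, hgeom.tsum_eq]
    field_simp
  refine ⟨⟨?_, ?_⟩, ?_, ?_⟩
  · intro x
    simp only [phiDist]
    split <;> positivity
  · -- HasSum phiDist 1
    rw [phi_eq]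
    have hf : HasSum (fun i : Fin 2 => if i = 0 then pr ^ 2 else pr * (1 - pr)) pr := by
      have h := hasSum_fintype (fun i : Fin 2 => if i = 0 then pr ^ 2 else pr * (1 - pr))
      have he : ∑ i : Fin 2, (if i = 0 then pr ^ 2 else pr * (1 - pr)) = pr := by
        rw [Fin.sum_univ_two]
        rw [if_pos rfl, if_neg (show (1 : Fin 2) ≠ 0 by decide)]
        ring
      rwa [he] at h
    have hfpos : (0 : Fin 2 → ℝ) ≤ fun i => if i = 0 then pr ^ 2 else pr * (1 - pr) := by
      intro i
      dsimp
      split <;> nlinarith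
    have hgpos : (0 : ℕ → ℝ) ≤ fun n => (1 - pr) ^ n := by
      intro n
      exact pow_nonneg hr0 n
    have hsummable := Summable.mul_of_nonneg hf.summable hgeom.summable hfpos hgpos
    have := hf.mul hgeom hsummable
    rwa [mul_inv_cancel₀ hne] at this
  · -- invariance
    rintro ⟨j, n⟩
    rcases n with _ | n
    · rcases fin2 j with h | h <;> subst h
      · rw [key_col pr pr 0 _ (by simp), htsum0]
        simp [phiDist] <;> ring
      · rw [key_col pr (1 - pr) 1 _ (by simp [show (1 : Fin 2) ≠ 0 by decide]), htsum0]
        simp [phiDist, show (1 : Fin 2) ≠ 0 by decide] <;> ring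
    · rcases fin2 j with h | h <;> subst h
      · rw [key_succ pr pr 0 _ _ (by simp)]
        simp [phiDist, show (1 : Fin 2) ≠ 0 by decide] <;> ring
      · rw [key_succ pr (1 - pr) 1 _ _ (by simp [show (1 : Fin 2) ≠ 0 by decide])]
        simp [phiDist, show (1 : Fin 2) ≠ 0 by decide] <;> ring
  · -- uniqueness
    intro ψ hpos hsum hinv
    have hS : ∀ i : Fin 2, Summable (fun n => ψ (i, n)) := fun i =>
      hsum.summable.comp_injective (injmk i)
    set T0 := ∑' n, ψ ((0 : Fin 2), n) with hT0def
    have h00 : ψ ((0 : Fin 2), 0) = T0 * pr := by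
      rw [← hinv ((0 : Fin 2), 0), key_col pr pr 0 _ (by simp)]
    have h10 : ψ ((1 : Fin 2), 0) = T0 * (1 - pr) := by
      rw [← hinv ((1 : Fin 2), 0), key_col pr (1 - pr) 1 _ (by simp [show (1 : Fin 2) ≠ 0 by decide])]
    have hrec0 : ∀ n, ψ ((0 : Fin 2), n + 1) = ψ ((1 : Fin 2), n) * pr := fun n => by
      rw [← hinv ((0 : Fin 2), n + 1), key_succ pr pr 0 _ _ (by simp)]
    have hrec1 : ∀ n, ψ ((1 : Fin 2), n + 1) = ψ ((1 : Fin 2), n) * (1 - pr) := fun n => by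
      rw [← hinv ((1 : Fin 2), n + 1), key_succ pr (1 - pr) 1 _ _ (by simp [show (1 : Fin 2) ≠ 0 by decide])]
    have h1n : ∀ n, ψ ((1 : Fin 2), n) = T0 * (1 - pr) * (1 - pr) ^ n := by
      intro n
      induction n with
      | zero => simpa using h10
      | succ k ih => rw [hrec1 k, ih] <;> ring
    -- total sum splits
    have hfib : HasSum (fun i : Fin 2 => ∑' n, ψ (i, n)) 1 :=
      hsum.prod_fiberwise (fun i => (hS i).hasSum)
    have htot : T0 + ∑' n, ψ ((1 : Fin 2), n) = 1 := by
      have := hfib.tsum_eq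
      rw [tsum_fintype, Fin.sum_univ_two] at this
      exact this
    have hT1 : ∑' n, ψ ((1 : Fin 2), n) = T0 * (1 - pr) * pr⁻¹ := by
      rw [tsum_congr h1n, tsum_mul_left, hgeom.tsum_eq]
    have hT0 : T0 = pr := by
      rw [hT1] at htot
      field_simp at htot
      nlinarith [htot]
    funext x
    obtain ⟨i, n⟩ := x
    rcases fin2 i with h | h <;> subst h
    · rcases n with _ | n
      · rw [h00, hT0]
        simp [phiDist] <;> ring
      · rw [hrec0, h1n, hT0]
        simp [phiDist] <;> ring
    · rw [h1n, hT0]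
      simp [phiDist, show (1 : Fin 2) ≠ 0 by decide] <;> ring
end

section
/- The number χ := (δ/β)^{(1−π)/π}·((β+δ)/δ)^{(1+β(1−π))/(βπ)}·(κ+ε)^{1/(βπ)}·(1−κ−ε)^{(1−π)/π}·(1−κ+ε·(1−π)/π) is the unique positive solution χ' of the equation log(1 − d*) + β·(π·log(χ') + (1−π)·log(1 − s(2)·(1 − d*))) = β·(π·log(1 − s(1)) + (1−π)·log(1 − s(2))). -/
/-- The closed-form value `χ` from Proposition 7(ii). -/
noncomputable def chiVal (β δ pr κ ε : ℝ) : ℝ :=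
  (δ / β) ^ ((1 - pr) / pr) * ((β + δ) / δ) ^ ((1 + β * (1 - pr)) / (β * pr)) *
    (κ + ε) ^ (1 / (β * pr)) * (1 - κ - ε) ^ ((1 - pr) / pr) *
    (1 - κ + ε * (1 - pr) / pr)

/-- The binding participation constraint of the young at the fixed point `d*` of the
debt dynamics, with `s 1 = κ - ε (1-π)/π`, `s 2 = κ + ε` and
`d* = 1 - δ/(s 2 (β + δ))`, as an equation in `x = 1 - s 1 (1 - b₁ d*)`. -/
def pcEq (β δ pr κ ε x : ℝ) : Prop :=
  Real.log (1 - (1 - δ / ((κ + ε) * (β + δ)))) +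
      β * (pr * Real.log x +
        (1 - pr) * Real.log (1 - (κ + ε) * (1 - (1 - δ / ((κ + ε) * (β + δ)))))) =
    β * (pr * Real.log (1 - (κ - ε * (1 - pr) / pr)) +
      (1 - pr) * Real.log (1 - (κ + ε)))

/-- `χ = (δ/β)^((1-π)/π) ((β+δ)/δ)^((1+β(1-π))/(βπ)) (κ+ε)^(1/(βπ)) (1-κ-ε)^((1-π)/π)
(1-κ+ε(1-π)/π)` is the unique positive solution of the binding participation
constraint at the fixed point of the debt dynamics. -/
theorem stmt_12 (β δ pr κ ε : ℝ)
    (hβ : β ∈ Set.Ioc (0 : ℝ) 1) (hδ : δ ∈ Set.Ioc (0 : ℝ) 1)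
    (hpr : pr ∈ Set.Ioo (0 : ℝ) 1)
    (hs1pos : 0 < κ - ε * (1 - pr) / pr)
    (hs12 : κ - ε * (1 - pr) / pr < κ + ε)
    (hs2lt : κ + ε < 1)
    (hfb : δ / (β + δ) < κ + ε) :
    (0 < chiVal β δ pr κ ε ∧ pcEq β δ pr κ ε (chiVal β δ pr κ ε)) ∧
    ∀ x : ℝ, 0 < x → pcEq β δ pr κ ε x → x = chiVal β δ pr κ ε := by
  obtain ⟨hβ0, hβ1⟩ := hβ
  obtain ⟨hδ0, hδ1⟩ := hδ
  obtain ⟨hpr0, hpr1⟩ := hpr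
  have hβδ : 0 < β + δ := by linarith
  have hs2 : 0 < κ + ε := lt_trans (div_pos hδ0 hβδ) hfb
  have h1s2 : 0 < 1 - κ - ε := by linarith
  have h1s1 : 0 < 1 - κ + ε * (1 - pr) / pr := by linarith
  have hdb : (0:ℝ) < δ / β := div_pos hδ0 hβ0
  have hbd : (0:ℝ) < (β + δ) / δ := div_pos hβδ hδ0
  have hχ : 0 < chiVal β δ pr κ ε := by
    unfold chiVal
    have h1 := Real.rpow_pos_of_pos hdb ((1 - pr) / pr)
    have h2 := Real.rpow_pos_of_pos hbd ((1 + β * (1 - pr)) / (β * pr))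
    have h3 := Real.rpow_pos_of_pos hs2 (1 / (β * pr))
    have h4 := Real.rpow_pos_of_pos h1s2 ((1 - pr) / pr)
    positivity
  have hlogχ : Real.log (chiVal β δ pr κ ε) =
      ((1 - pr) / pr) * (Real.log δ - Real.log β) +
      ((1 + β * (1 - pr)) / (β * pr)) * (Real.log (β + δ) - Real.log δ) +
      (1 / (β * pr)) * Real.log (κ + ε) +
      ((1 - pr) / pr) * Real.log (1 - κ - ε) +
      Real.log (1 - κ + ε * (1 - pr) / pr) := by
    unfold chiVal
    rw [Real.log_mul (by positivity) (by positivity),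
        Real.log_mul (by positivity) (by positivity),
        Real.log_mul (by positivity) (by positivity),
        Real.log_mul (by positivity) (by positivity),
        Real.log_rpow hdb, Real.log_rpow hbd, Real.log_rpow hs2, Real.log_rpow h1s2,
        Real.log_div hδ0.ne' hβ0.ne', Real.log_div hβδ.ne' hδ0.ne']
  have key : ∀ y : ℝ, pcEq β δ pr κ ε y ↔
      β * pr * Real.log y = β * pr * Real.log (chiVal β δ pr κ ε) := by
    intro y
    have e1 : (1:ℝ) - (1 - δ / ((κ + ε) * (β + δ))) = δ / ((κ + ε) * (β + δ)) := by ring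
    have e2 : (1:ℝ) - (κ + ε) * (δ / ((κ + ε) * (β + δ))) = β / (β + δ) := by
      field_simp; ring
    have e3 : Real.log (δ / ((κ + ε) * (β + δ))) =
        Real.log δ - (Real.log (κ + ε) + Real.log (β + δ)) := by
      rw [Real.log_div hδ0.ne' (by positivity), Real.log_mul hs2.ne' hβδ.ne']
    have e4 : Real.log (β / (β + δ)) = Real.log β - Real.log (β + δ) :=
      Real.log_div hβ0.ne' hβδ.ne'
    have e5 : (1:ℝ) - (κ - ε * (1 - pr) / pr) = 1 - κ + ε * (1 - pr) / pr := by ring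
    have e6 : (1:ℝ) - (κ + ε) = 1 - κ - ε := by ring
    unfold pcEq
    rw [e1, e2, e3, e4, e5, e6, hlogχ]
    set A := Real.log β
    set B := Real.log δ
    set C := Real.log (β + δ)
    set D := Real.log (κ + ε)
    set E := Real.log (1 - κ - ε)
    set F := Real.log (1 - κ + ε * (1 - pr) / pr)
    set Ly := Real.log y
    have hkey2 : β * pr * ((1 - pr) / pr * (B - A) +
        (1 + β * (1 - pr)) / (β * pr) * (C - B) + 1 / (β * pr) * D +
        (1 - pr) / pr * E + F) =
        β * pr * F + β * (1 - pr) * E - B + D + C - β * (1 - pr) * A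
          + β * (1 - pr) * C := by
      field_simp
      ring
    constructor
    · intro h
      linear_combination h - hkey2
    · intro h
      linear_combination h + hkey2
  refine ⟨⟨hχ, (key _).mpr rfl⟩, fun x hx hpc => ?_⟩
  have hlx : Real.log x = Real.log (chiVal β δ pr κ ε) := by
    have := (key x).mp hpc
    have hbp : β * pr ≠ 0 := by positivity
    exact mul_left_cancel₀ hbp this
  exact Real.log_injOn_pos (Set.mem_Ioi.mpr hx) (Set.mem_Ioi.mpr hχ) hlx
end

section
/- Assume 0 < χ̃ < 1. Then ν^∞ := (δ/β)·(χ̃^{−1} − 1)^{−1} is the unique ν > 0 satisfying log(δ/(β+δ)) + β·(π·log(β·ν/(β·ν+δ)) + (1−π)·log(β/(β+δ))) = υ(2). -/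
/-- The quantity `χ̃` of equation (S.3) in the two-state example. -/
noncomputable def chiTilde (β δ pr s1 s2 : ℝ) : ℝ :=
  (δ / β) ^ ((1 - pr) / pr) * ((β + δ) / δ) ^ ((1 + β * (1 - pr)) / (β * pr)) *
    s2 ^ (1 / (β * pr)) * (1 - s2) ^ ((1 - pr) / pr) * (1 - s1)

/-- The limiting binding participation constraint of the young in state 2, as an
equation in `ν = 1 + μ^(∞)`, where `υ(2)` is the autarky lifetime utility in state 2. -/
def limitPC (β δ pr s1 s2 ν : ℝ) : Prop :=
  Real.log (δ / (β + δ)) +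
      β * (pr * Real.log (β * ν / (β * ν + δ)) +
        (1 - pr) * Real.log (β / (β + δ))) =
    Real.log s2 + β * (pr * Real.log (1 - s1) + (1 - pr) * Real.log (1 - s2))

/-- If `0 < χ̃ < 1`, then `ν^∞ = (δ/β) (χ̃⁻¹ - 1)⁻¹` is the unique `ν > 0` solving the
limiting binding participation constraint of the young in state 2. -/
theorem stmt_13 (β δ pr s1 s2 : ℝ)
    (hβ : β ∈ Set.Ioc (0 : ℝ) 1) (hδ : δ ∈ Set.Ioc (0 : ℝ) 1)
    (hpr : pr ∈ Set.Ioo (0 : ℝ) 1)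
    (hs1 : s1 ∈ Set.Ioo (0 : ℝ) 1) (hs2 : s2 ∈ Set.Ioo (0 : ℝ) 1) (h12 : s1 < s2)
    (hχ : chiTilde β δ pr s1 s2 ∈ Set.Ioo (0 : ℝ) 1) :
    (0 < (δ / β) * ((chiTilde β δ pr s1 s2)⁻¹ - 1)⁻¹ ∧
      limitPC β δ pr s1 s2 ((δ / β) * ((chiTilde β δ pr s1 s2)⁻¹ - 1)⁻¹)) ∧
    ∀ ν : ℝ, 0 < ν → limitPC β δ pr s1 s2 ν →
      ν = (δ / β) * ((chiTilde β δ pr s1 s2)⁻¹ - 1)⁻¹ := by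
  obtain ⟨hβ0, hβ1⟩ := hβ
  obtain ⟨hδ0, hδ1⟩ := hδ
  obtain ⟨hpr0, hpr1⟩ := hpr
  obtain ⟨hs10, hs11⟩ := hs1
  obtain ⟨hs20, hs21⟩ := hs2
  obtain ⟨hχ0, hχ1⟩ := hχ
  set χ := chiTilde β δ pr s1 s2 with hχdef
  have hβδ : 0 < β + δ := by linarith
  have h1χ : 0 < 1 - χ := by linarith
  have hβne : β ≠ 0 := ne_of_gt hβ0
  have hδne : δ ≠ 0 := ne_of_gt hδ0
  have hprne : pr ≠ 0 := ne_of_gt hpr0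
  have hχne : χ ≠ 0 := ne_of_gt hχ0
  -- the candidate solution
  set ν := (δ / β) * (χ⁻¹ - 1)⁻¹ with hνdef
  have hinv : (χ⁻¹ - 1)⁻¹ = χ / (1 - χ) := by
    rw [inv_eq_iff_eq_inv]
    field_simp
  have hν0 : 0 < ν := by
    rw [hνdef, hinv]
    positivity
  have hβν : β * ν = δ * χ / (1 - χ) := by
    rw [hνdef, hinv]; field_simp
  have hβνδ : β * ν + δ = δ / (1 - χ) := by
    rw [hβν]; field_simp; ring
  have hratio : β * ν / (β * ν + δ) = χ := by
    rw [hβνδ, hβν]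
    field_simp
  -- log of chiTilde
  have hlogχ : Real.log χ = (1 - pr) / pr * (Real.log δ - Real.log β)
      + (1 + β * (1 - pr)) / (β * pr) * (Real.log (β + δ) - Real.log δ)
      + 1 / (β * pr) * Real.log s2
      + (1 - pr) / pr * Real.log (1 - s2) + Real.log (1 - s1) := by
    rw [hχdef, chiTilde]
    have h1 : (0:ℝ) < δ / β := by positivity
    have h2 : (0:ℝ) < (β + δ) / δ := by positivity
    have h3 : (0:ℝ) < 1 - s2 := by linarith
    have h4 : (0:ℝ) < 1 - s1 := by linarith
    rw [Real.log_mul (by positivity) (ne_of_gt h4),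
        Real.log_mul (by positivity) (by positivity),
        Real.log_mul (by positivity) (by positivity),
        Real.log_mul (by positivity) (by positivity),
        Real.log_rpow h1, Real.log_rpow h2, Real.log_rpow hs20, Real.log_rpow h3,
        Real.log_div hδne hβne, Real.log_div (ne_of_gt hβδ) hδne]
  have hlogχ' : β * pr * Real.log χ = β * (1 - pr) * (Real.log δ - Real.log β)
      + (1 + β * (1 - pr)) * (Real.log (β + δ) - Real.log δ)
      + Real.log s2 + β * (1 - pr) * Real.log (1 - s2)
      + β * pr * Real.log (1 - s1) := by
    rw [hlogχ]; field_simp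
  -- the PC holds iff the ν-log equals log χ
  have key : ∀ x : ℝ, Real.log (δ / (β + δ)) +
      β * (pr * x + (1 - pr) * Real.log (β / (β + δ))) =
      Real.log s2 + β * (pr * Real.log (1 - s1) + (1 - pr) * Real.log (1 - s2))
      ↔ x = Real.log χ := by
    intro x
    rw [Real.log_div hδne (ne_of_gt hβδ), Real.log_div hβne (ne_of_gt hβδ)]
    constructor
    · intro h
      have hβpr : β * pr ≠ 0 := by positivity
      refine mul_left_cancel₀ hβpr ?_
      linear_combination h - hlogχ'
    · intro h
      linear_combination (β * pr) * h + hlogχ'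
  constructor
  · refine ⟨hν0, ?_⟩
    unfold limitPC
    rw [hratio]
    exact (key _).2 rfl
  · intro ν' hν'0 hpc
    unfold limitPC at hpc
    have hx := (key _).1 hpc
    have hr0 : 0 < β * ν' / (β * ν' + δ) := by positivity
    have heq : β * ν' / (β * ν' + δ) = χ :=
      Real.log_injOn_pos (Set.mem_Ioi.2 hr0) (Set.mem_Ioi.2 hχ0) hx
    have hd : β * ν' + δ ≠ 0 := by positivity
    rw [div_eq_iff hd] at heq
    have h2 : ν' * (β * (1 - χ)) = δ * χ := by linear_combination heq
    have hden : β * (1 - χ) ≠ 0 := by positivity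
    have hν' : ν' = δ * χ / (β * (1 - χ)) := by
      rw [eq_div_iff hden]; exact h2
    rw [hν', hνdef, hinv]
    field_simp
end

section
/- For every k ≥ 0 and every state i, the bond price function d ↦ p^k(i,d) is (weakly) decreasing on D; consequently, for k ≥ 1 the conditional yield y^k(i,d) := −(1/k)·log(p^k(i,d)) is (weakly) increasing in d for each i and k. -/
/-- Bond prices are decreasing in debt and yields are increasing in debt
(Proposition 5(iii)).  With debt levels in an interval `D ⊆ (-∞, 1)`, weakly
increasing debt policy functions `b r : D → D`, positive old-age consumption shares
`1 - s r (1 - b r d) > 0`, stochastic discount factor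
`m i d r = β s i (1-d) / (1 - s r (1 - b r d))` and bond prices defined recursively
by `P 0 ≡ 1`, `P (k+1) i d = ∑ r, π r · m i d r · P k r (b r d)`, every bond price
`d ↦ P k i d` is weakly decreasing on `D`, and hence for `k ≥ 1` every conditional
yield `d ↦ -(1/k) log (P k i d)` is weakly increasing on `D`. -/
theorem stmt_17 (I : ℕ) (p s : Fin I → ℝ)
    (hp : ∀ i, 0 < p i) (hpsum : ∑ i, p i = 1)
    (hs : ∀ i, s i ∈ Set.Ioo (0 : ℝ) 1)
    (D : Set ℝ) (hD : D ⊆ Set.Iio 1) (hDconn : D.OrdConnected)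
    (b : Fin I → ℝ → ℝ)
    (hbmaps : ∀ r, ∀ d ∈ D, b r d ∈ D)
    (hbmono : ∀ r, MonotoneOn (b r) D)
    (hbpos : ∀ r, ∀ d ∈ D, 0 < 1 - s r * (1 - b r d))
    (β : ℝ) (hβ : 0 < β)
    (P : ℕ → Fin I → ℝ → ℝ)
    (hP0 : ∀ i d, P 0 i d = 1)
    (hPrec : ∀ k i, ∀ d ∈ D, P (k + 1) i d
        = ∑ r, p r * (β * s i * (1 - d) / (1 - s r * (1 - b r d))) * P k r (b r d)) :
    (∀ k i, AntitoneOn (fun d => P k i d) D) ∧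
    (∀ k : ℕ, 1 ≤ k → ∀ i,
      MonotoneOn (fun d => -(1 / (k : ℝ)) * Real.log (P k i d)) D) := by

  have hI : Nonempty (Fin I) := by
    rcases Nat.eq_zero_or_pos I with h | h
    · subst h; simp at hpsum
    · exact Fin.pos_iff_nonempty.mp h
  have key : ∀ k, ∀ i : Fin I, (∀ d ∈ D, 0 < P k i d) ∧
      ∀ d₁ ∈ D, ∀ d₂ ∈ D, d₁ ≤ d₂ → P k i d₂ ≤ P k i d₁ := by
    intro k
    induction k with
    | zero =>
      intro i
      exact ⟨fun d _ => by simp [hP0], fun d₁ _ d₂ _ _ => by simp [hP0]⟩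
    | succ k ih =>
      intro i
      have hm : ∀ r : Fin I, ∀ d ∈ D, 0 < β * s i * (1 - d) / (1 - s r * (1 - b r d)) := by
        intro r d hd
        apply div_pos
        · have h1 := (hs i).1
          have h2 : d < 1 := hD hd
          exact mul_pos (mul_pos hβ h1) (by linarith)
        · exact hbpos r d hd
      constructor
      · intro d hd
        rw [hPrec k i d hd]
        apply Finset.sum_pos
        · intro r _
          exact mul_pos (mul_pos (hp r) (hm r d hd)) ((ih r).1 _ (hbmaps r d hd))
        · exact Finset.univ_nonempty
      · intro d₁ hd₁ d₂ hd₂ hle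
        rw [hPrec k i d₁ hd₁, hPrec k i d₂ hd₂]
        apply Finset.sum_le_sum
        intro r _
        have h1 := hm r d₁ hd₁
        have h2 := hm r d₂ hd₂
        have hden₁ := hbpos r d₁ hd₁
        have hbr := hbmono r hd₁ hd₂ hle
        have hsr := (hs r).1
        have hsi := (hs i).1
        have hmle : β * s i * (1 - d₂) / (1 - s r * (1 - b r d₂))
            ≤ β * s i * (1 - d₁) / (1 - s r * (1 - b r d₁)) := by
          have hd₁1 : d₁ < 1 := hD hd₁
          apply div_le_div₀ (mul_pos (mul_pos hβ hsi) (by linarith)).le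
            (by nlinarith [mul_pos hβ hsi]) hden₁ (by nlinarith)
        have hPle := (ih r).2 _ (hbmaps r d₁ hd₁) _ (hbmaps r d₂ hd₂) hbr
        have hPpos₂ := (ih r).1 _ (hbmaps r d₂ hd₂)
        exact mul_le_mul (mul_le_mul le_rfl hmle h2.le (hp r).le) hPle hPpos₂.le
          (mul_pos (hp r) h1).le
  refine ⟨fun k i d₁ hd₁ d₂ hd₂ h => (key k i).2 d₁ hd₁ d₂ hd₂ h, ?_⟩
  intro k hk i d₁ hd₁ d₂ hd₂ hle
  have hpos₂ := (key k i).1 d₂ hd₂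
  have hmono := (key k i).2 d₁ hd₁ d₂ hd₂ hle
  have hlog : Real.log (P k i d₂) ≤ Real.log (P k i d₁) :=
    Real.log_le_log hpos₂ hmono
  have hk0 : (0:ℝ) ≤ 1 / (k : ℝ) := by positivity
  simp only []
  nlinarith [mul_nonneg hk0 (sub_nonneg.mpr hlog)]
end

section
/- For every d: BR*(d) = (a − 1)·(1 − d), where a := (1 − δ) + (β + δ)·∑_r π(r)·s(r); hence the first-best fiscal reaction function τ*(d) := d − BR*(d) is linear: τ*(d) = (1 − a) + a·d. Moreover, if ∑_r π(r)·s(r) > δ/(β+δ) then a > 1, so that BR* is strictly decreasing and τ* is strictly increasing in d. -/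
/-- The first-best bond revenue function is linear in debt:
`BR* d = (a - 1)(1 - d)` with `a = (1 - δ) + (β + δ) ∑ r, π r · s r`, so the
first-best fiscal reaction function `τ* d = d - BR* d = (1 - a) + a d` is linear;
moreover if `∑ r, π r · s r > δ/(β+δ)` then `a > 1`, `BR*` is strictly decreasing
and `τ*` is strictly increasing in `d`. -/
theorem stmt_18 (I : ℕ) (p s : Fin I → ℝ)
    (hp : ∀ i, 0 < p i) (hpsum : ∑ i, p i = 1)
    (hs : ∀ i, s i ∈ Set.Ioo (0 : ℝ) 1)
    (β δ : ℝ) (hβ : 0 < β) (hδ : 0 < δ)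
    (dstar : Fin I → ℝ) (hdstar : ∀ r, dstar r = 1 - δ / ((β + δ) * s r))
    (BR : ℝ → ℝ)
    (hBR : ∀ d, BR d
        = β * ∑ r, p r * ((1 - d) / (1 - s r * (1 - dstar r))) * (s r * dstar r))
    (a : ℝ) (ha : a = (1 - δ) + (β + δ) * ∑ r, p r * s r) :
    (∀ d, BR d = (a - 1) * (1 - d)) ∧
    (∀ d, d - BR d = (1 - a) + a * d) ∧
    (δ / (β + δ) < ∑ r, p r * s r →
      1 < a ∧ StrictAnti BR ∧ StrictMono (fun d => d - BR d)) := by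
  have hbd : (0:ℝ) < β + δ := by linarith
  have hbd' : β + δ ≠ 0 := ne_of_gt hbd
  have hβ' : β ≠ 0 := ne_of_gt hβ
  have key : ∀ d, BR d = (a - 1) * (1 - d) := by
    intro d
    have h1 : ∀ r : Fin I, p r * ((1 - d) / (1 - s r * (1 - dstar r))) * (s r * dstar r)
        = (β + δ) / β * (1 - d) * (p r * s r)
          - (β + δ) / β * (1 - d) * (δ / (β + δ)) * p r := by
      intro r
      have hs0 : s r ≠ 0 := ne_of_gt (hs r).1
      have hden : 1 - s r * (1 - dstar r) = β / (β + δ) := by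
        rw [hdstar]; field_simp; ring
      rw [hden, hdstar]
      field_simp
    rw [hBR]
    simp_rw [h1]
    rw [Finset.sum_sub_distrib, ← Finset.mul_sum, ← Finset.mul_sum, hpsum, ha]
    field_simp
    ring
  refine ⟨key, fun d => by rw [key]; ring, fun hlt => ?_⟩
  have ha1' : 1 < a := by
    rw [ha]
    have : δ / (β + δ) * (β + δ) < (∑ r, p r * s r) * (β + δ) :=
      mul_lt_mul_of_pos_right hlt hbd
    rw [div_mul_cancel₀ _ hbd'] at this
    linarith [this]
  refine ⟨ha1', fun x y hxy => ?_, fun x y hxy => ?_⟩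
  · simp only [key]; nlinarith
  · simp only [key]; nlinarith
end
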